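/- arXiv:2110.08751 — 5 statements merged into one kernel-verified Lean document; each statement's English description precedes it below -/
import Mathlib

section
/- For any connected finite simple graph Γ on N ≥ 3 vertices whose smallest vertex degree d satisfies d ≥ 3, the spectral gap from 1 satisfies ε ≤ √(d−1)/d, and moreover √(d−1)/d < 1/2. -/
open Finset

/-- `μ` is an eigenvalue of the normalized Laplacian of `G`, i.e. there is a nonzero
function `f : V → ℝ` with `Δ f = μ • f`, where
`Δ f (v) = f v - (1 / deg v) * ∑_{w ∼ v} f w`. -/
def normLapEigenvalue {V : Type*} [Fintype V] (G : SimpleGraph V) [DecidableRel G.Adj]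
    (μ : ℝ) : Prop :=
  ∃ f : V → ℝ, f ≠ 0 ∧
    ∀ v : V, f v - (∑ w ∈ G.neighborFinset v, f w) / (G.degree v : ℝ) = μ * f v

/-- The spectral gap from `1` of the normalized Laplacian of `G`:
`ε = min_i |1 - λ_i|`, the minimum taken over all eigenvalues `λ_i`. -/
noncomputable def specGapOne {V : Type*} [Fintype V] (G : SimpleGraph V)
    [DecidableRel G.Adj] : ℝ :=
  sInf {x : ℝ | ∃ μ : ℝ, normLapEigenvalue G μ ∧ x = |1 - μ|}

section AuxNS
open Matrix
set_option linter.unusedSectionVars false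
set_option linter.unusedVariables false

namespace SpecGapAux

variable {V : Type*} [Fintype V] [DecidableEq V] (G : SimpleGraph V) [DecidableRel G.Adj]

/-- `∑_{x ∼ v} 1/deg x`. -/
noncomputable def rsum (v : V) : ℝ := ∑ x ∈ G.neighborFinset v, 1 / (G.degree x : ℝ)

/-- `ψ v = r v - ((d-1)/d²)·deg v` where `d` is the minimum degree. -/
noncomputable def psi (v : V) : ℝ :=
  rsum G v - (((G.minDegree : ℝ) - 1) / (G.minDegree : ℝ) ^ 2) * (G.degree v : ℝ)

variable {G}

lemma deg_pos (hd : 0 < G.minDegree) (v : V) : (0 : ℝ) < (G.degree v : ℝ) := by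
  have := G.minDegree_le_degree v
  exact_mod_cast lt_of_lt_of_le hd this

lemma mindeg_le_deg (v : V) : (G.minDegree : ℝ) ≤ (G.degree v : ℝ) := by
  exact_mod_cast G.minDegree_le_degree v

lemma one_div_deg_le (hd : 0 < G.minDegree) (v : V) :
    1 / (G.degree v : ℝ) ≤ 1 / (G.minDegree : ℝ) := by
  apply one_div_le_one_div_of_le (by exact_mod_cast hd) (mindeg_le_deg v)

lemma rsum_nonneg (v : V) : 0 ≤ rsum G v := by
  unfold rsum
  apply Finset.sum_nonneg
  intro x _
  positivity

/-- single-vertex test function computations -/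
lemma sum_ind (v : V) (x : V) :
    (∑ w ∈ G.neighborFinset x, (if w = v then (1 : ℝ) else 0)) =
      if x ∈ G.neighborFinset v then (1 : ℝ) else 0 := by
  rw [Finset.sum_ite_eq' (G.neighborFinset x) v (fun _ => (1 : ℝ))]
  congr 1
  simp only [SimpleGraph.mem_neighborFinset, eq_iff_iff]
  exact G.adj_comm x v

lemma qf_single (v : V) :
    (∑ x, (∑ w ∈ G.neighborFinset x, (if w = v then (1 : ℝ) else 0)) ^ 2 / (G.degree x : ℝ))
      = rsum G v := by
  unfold rsum
  rw [show (∑ x, (∑ w ∈ G.neighborFinset x, (if w = v then (1:ℝ) else 0)) ^ 2 / (G.degree x : ℝ))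
      = ∑ x, (if x ∈ G.neighborFinset v then (1:ℝ) / (G.degree x : ℝ) else 0) from
    Finset.sum_congr rfl (fun x _ => by rw [sum_ind]; split_ifs <;> simp)]
  rw [Finset.sum_ite_mem, Finset.univ_inter]

lemma weight_single (v : V) :
    (∑ w, (G.degree w : ℝ) * (if w = v then (1 : ℝ) else 0) ^ 2) = (G.degree v : ℝ) := by
  rw [show (∑ w, (G.degree w : ℝ) * (if w = v then (1:ℝ) else 0) ^ 2)
      = ∑ w, (if w = v then (G.degree w : ℝ) else 0) from
    Finset.sum_congr rfl (fun w _ => by split_ifs <;> ring)]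
  rw [Finset.sum_ite_eq' Finset.univ v (fun w => (G.degree w : ℝ))]
  simp


/-- two-vertex test function -/
noncomputable def pairFun (v v' : V) (t : ℝ) : V → ℝ :=
  fun w => (if w = v then (1 : ℝ) else 0) - t * (if w = v' then 1 else 0)

lemma pairFun_ne_zero (v v' : V) (hne : v ≠ v') (t : ℝ) : pairFun v v' t ≠ 0 := by
  intro h
  have := congrFun h v
  simp [pairFun, hne] at this

lemma qf_pair (v v' : V) (hne : v ≠ v') (t : ℝ) :
    (∑ x, (∑ w ∈ G.neighborFinset x, pairFun v v' t w) ^ 2 / (G.degree x : ℝ))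
      = rsum G v + t ^ 2 * rsum G v' -
        2 * t * ∑ x ∈ G.neighborFinset v ∩ G.neighborFinset v', 1 / (G.degree x : ℝ) := by
  have key : ∀ x, (∑ w ∈ G.neighborFinset x, pairFun v v' t w) ^ 2 / (G.degree x : ℝ)
      = (if x ∈ G.neighborFinset v then (1:ℝ) / (G.degree x : ℝ) else 0)
        + t ^ 2 * (if x ∈ G.neighborFinset v' then (1:ℝ) / (G.degree x : ℝ) else 0)
        - 2 * t * (if x ∈ G.neighborFinset v ∩ G.neighborFinset v'
            then (1:ℝ) / (G.degree x : ℝ) else 0) := by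
    intro x
    have hsum : (∑ w ∈ G.neighborFinset x, pairFun v v' t w)
        = (if x ∈ G.neighborFinset v then (1:ℝ) else 0)
          - t * (if x ∈ G.neighborFinset v' then (1:ℝ) else 0) := by
      unfold pairFun
      rw [Finset.sum_sub_distrib, ← Finset.mul_sum, sum_ind,
        Finset.sum_ite_eq' (G.neighborFinset x) v' (fun _ => (1 : ℝ))]
      congr 2
      simp only [SimpleGraph.mem_neighborFinset]
      exact if_congr (G.adj_comm x v') rfl rfl
    rw [hsum]
    by_cases h1 : x ∈ G.neighborFinset v <;> by_cases h2 : x ∈ G.neighborFinset v' <;>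
      simp [h1, h2, Finset.mem_inter] <;> ring
  rw [Finset.sum_congr rfl (fun x _ => key x), Finset.sum_sub_distrib, Finset.sum_add_distrib,
    ← Finset.mul_sum, ← Finset.mul_sum]
  rw [Finset.sum_ite_mem, Finset.univ_inter, Finset.sum_ite_mem, Finset.univ_inter,
    Finset.sum_ite_mem, Finset.univ_inter]
  rfl

lemma weight_pair (v v' : V) (hne : v ≠ v') (t : ℝ) :
    (∑ w, (G.degree w : ℝ) * pairFun v v' t w ^ 2)
      = (G.degree v : ℝ) + t ^ 2 * (G.degree v' : ℝ) := by
  have key : ∀ w, (G.degree w : ℝ) * pairFun v v' t w ^ 2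
      = (if w = v then (G.degree w : ℝ) else 0)
        + t ^ 2 * (if w = v' then (G.degree w : ℝ) else 0) := by
    intro w
    unfold pairFun
    by_cases h1 : w = v
    · subst h1
      simp [hne]
    · by_cases h2 : w = v'
      · subst h2
        simp [Ne.symm hne, h1]
        ring
      · simp [h1, h2]
  rw [Finset.sum_congr rfl (fun w _ => key w), Finset.sum_add_distrib, ← Finset.mul_sum,
    Finset.sum_ite_eq' Finset.univ v (fun w => (G.degree w : ℝ)),
    Finset.sum_ite_eq' Finset.univ v' (fun w => (G.degree w : ℝ))]
  simp

lemma rsum_le (hd : 0 < G.minDegree) (v : V) :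
    rsum G v ≤ (G.degree v : ℝ) / (G.minDegree : ℝ) := by
  unfold rsum
  have := Finset.sum_le_card_nsmul (G.neighborFinset v) (fun x => 1 / (G.degree x : ℝ))
    (1 / (G.minDegree : ℝ)) (fun x _ => one_div_deg_le hd x)
  rw [G.card_neighborFinset_eq_degree] at this
  calc _ ≤ (G.degree v) • (1 / (G.minDegree : ℝ)) := this
  _ = (G.degree v : ℝ) / (G.minDegree : ℝ) := by
      rw [nsmul_eq_mul]; ring

/-- a minimum-degree vertex `v` adjacent to `u` has `ψ v ≤ 1/deg u`. -/
lemma psi_le_of_mindeg_adj (hd : 3 ≤ G.minDegree) (v u : V)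
    (hv : G.degree v = G.minDegree) (hu : u ∈ G.neighborFinset v) :
    psi G v ≤ 1 / (G.degree u : ℝ) := by
  have hd0 : 0 < G.minDegree := by omega
  have hdpos : (0:ℝ) < (G.minDegree : ℝ) := by exact_mod_cast hd0
  have hr : rsum G v ≤ 1 / (G.degree u : ℝ)
      + ((G.minDegree : ℝ) - 1) * (1 / (G.minDegree : ℝ)) := by
    unfold rsum
    rw [← Finset.sum_erase_add _ _ hu]
    have hbound := Finset.sum_le_card_nsmul ((G.neighborFinset v).erase u)
      (fun x => 1 / (G.degree x : ℝ)) (1 / (G.minDegree : ℝ))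
      (fun x _ => one_div_deg_le hd0 x)
    have hcard : ((G.neighborFinset v).erase u).card = G.minDegree - 1 := by
      rw [Finset.card_erase_of_mem hu, G.card_neighborFinset_eq_degree, hv]
    rw [hcard] at hbound
    have : ((G.minDegree - 1 : ℕ) : ℝ) = (G.minDegree : ℝ) - 1 := by
      have : 1 ≤ G.minDegree := by omega
      push_cast [this]
      ring
    calc _ ≤ (G.minDegree - 1) • (1 / (G.minDegree : ℝ)) + 1 / (G.degree u : ℝ) := by
          exact add_le_add hbound le_rfl
    _ = 1 / (G.degree u : ℝ) + ((G.minDegree : ℝ) - 1) * (1 / (G.minDegree : ℝ)) := by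
          rw [nsmul_eq_mul, this]; ring
  unfold psi
  rw [hv]
  have : (((G.minDegree : ℝ) - 1) / (G.minDegree : ℝ) ^ 2) * (G.minDegree : ℝ)
      = ((G.minDegree : ℝ) - 1) * (1 / (G.minDegree : ℝ)) := by
    field_simp
  rw [this]
  linarith

/-- The pair construction: two distinct vertices with a common neighbor `x0` and small
product of `ψ`-values give a good test vector. -/
lemma exists_testvec_pair (hd : 3 ≤ G.minDegree) (v v' x0 : V) (hne : v ≠ v')
    (hx : x0 ∈ G.neighborFinset v ∩ G.neighborFinset v')
    (hpsi' : 0 < psi G v') (hprod : psi G v * psi G v' ≤ (1 / (G.degree x0 : ℝ)) ^ 2) :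
    ∃ h : V → ℝ, h ≠ 0 ∧
      ∑ x, (∑ w ∈ G.neighborFinset x, h w) ^ 2 / (G.degree x : ℝ) ≤
        (((G.minDegree : ℝ) - 1) / (G.minDegree : ℝ) ^ 2) *
          ∑ w, (G.degree w : ℝ) * h w ^ 2 := by
  have hd0 : 0 < G.minDegree := by omega
  have hdx : (0:ℝ) < (G.degree x0 : ℝ) := deg_pos hd0 x0
  set c2 : ℝ := ((G.minDegree : ℝ) - 1) / (G.minDegree : ℝ) ^ 2 with hc2
  set t : ℝ := 1 / ((G.degree x0 : ℝ) * psi G v') with ht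
  have htpos : 0 < t := by positivity
  refine ⟨pairFun v v' t, pairFun_ne_zero v v' hne t, ?_⟩
  rw [qf_pair v v' hne t, weight_pair v v' hne t]
  have hW : 1 / (G.degree x0 : ℝ) ≤
      ∑ x ∈ G.neighborFinset v ∩ G.neighborFinset v', 1 / (G.degree x : ℝ) := by
    apply Finset.single_le_sum (f := fun x => 1 / (G.degree x : ℝ)) (fun x _ => by positivity) hx
  have hts : t ^ 2 * psi G v' = 1 / ((G.degree x0 : ℝ) ^ 2 * psi G v') := by
    rw [ht]
    field_simp
  have h2t : 2 * t * (1 / (G.degree x0 : ℝ)) = 2 / ((G.degree x0 : ℝ) ^ 2 * psi G v') := by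
    rw [ht]
    field_simp
  have hkey : psi G v ≤ 1 / ((G.degree x0 : ℝ) ^ 2 * psi G v') := by
    rw [le_div_iff₀ (by positivity)]
    calc psi G v * ((G.degree x0 : ℝ) ^ 2 * psi G v')
        = (psi G v * psi G v') * (G.degree x0 : ℝ) ^ 2 := by ring
    _ ≤ (1 / (G.degree x0 : ℝ)) ^ 2 * (G.degree x0 : ℝ) ^ 2 := by
        apply mul_le_mul_of_nonneg_right hprod (by positivity)
    _ = 1 := by field_simp
  -- goal: rsum v + t²·rsum v' - 2t·W ≤ c2·(deg v + t²·deg v')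
  have hgoal : rsum G v + t ^ 2 * rsum G v' - 2 * t * (1 / (G.degree x0 : ℝ)) ≤
      c2 * ((G.degree v : ℝ) + t ^ 2 * (G.degree v' : ℝ)) := by
    have e1 : rsum G v = psi G v + c2 * (G.degree v : ℝ) := by unfold psi; rw [hc2]; ring
    have e2 : rsum G v' = psi G v' + c2 * (G.degree v' : ℝ) := by unfold psi; rw [hc2]; ring
    rw [e1, e2]
    have : psi G v + t ^ 2 * psi G v' - 2 * t * (1 / (G.degree x0 : ℝ)) ≤ 0 := by
      rw [hts, h2t]
      have h2 : (2:ℝ) / ((G.degree x0 : ℝ) ^ 2 * psi G v')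
          = 2 * (1 / ((G.degree x0 : ℝ) ^ 2 * psi G v')) := by ring
      rw [h2]
      linarith [hkey]
    nlinarith [this]
  have hmono : rsum G v + t ^ 2 * rsum G v' -
      2 * t * ∑ x ∈ G.neighborFinset v ∩ G.neighborFinset v', 1 / (G.degree x : ℝ) ≤
      rsum G v + t ^ 2 * rsum G v' - 2 * t * (1 / (G.degree x0 : ℝ)) := by
    have := mul_le_mul_of_nonneg_left hW (by positivity : (0:ℝ) ≤ 2 * t)
    linarith
  exact hmono.trans hgoal

/-- The combinatorial heart: a graph of minimum degree `d ≥ 3` admits a nonzero test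
vector whose Rayleigh quotient is at most `(d-1)/d²`. -/
theorem exists_testvec' [Nonempty V] (hd : 3 ≤ G.minDegree) :
    ∃ h : V → ℝ, h ≠ 0 ∧
      ∑ x, (∑ w ∈ G.neighborFinset x, h w) ^ 2 / (G.degree x : ℝ) ≤
        (((G.minDegree : ℝ) - 1) / (G.minDegree : ℝ) ^ 2) *
          ∑ v, (G.degree v : ℝ) * h v ^ 2 := by
  have hd0 : 0 < G.minDegree := by omega
  have hd3 : (3:ℝ) ≤ (G.minDegree : ℝ) := by exact_mod_cast hd
  set dR : ℝ := (G.minDegree : ℝ) with hdR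
  have hdpos : (0:ℝ) < dR := by linarith
  set c2 : ℝ := (dR - 1) / dR ^ 2 with hc2
  -- Branch A: some vertex with ψ ≤ 0
  by_cases hA : ∃ v, psi G v ≤ 0
  · obtain ⟨v, hv⟩ := hA
    refine ⟨fun w => if w = v then (1:ℝ) else 0, ?_, ?_⟩
    · intro h
      have := congrFun h v
      simp at this
    · rw [qf_single v, weight_single v]
      unfold psi at hv
      linarith
  push_neg at hA
  -- Branch B2 : some vertex with two distinct minimum-degree neighbors
  by_cases hB2 : ∃ u : V, ∃ v ∈ G.neighborFinset u, ∃ v' ∈ G.neighborFinset u,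
      v ≠ v' ∧ G.degree v = G.minDegree ∧ G.degree v' = G.minDegree
  · obtain ⟨u, v, hvu, v', hv'u, hne, hvmin, hv'min⟩ := hB2
    have huv : u ∈ G.neighborFinset v := by
      rw [SimpleGraph.mem_neighborFinset] at hvu ⊢
      exact hvu.symm
    have huv' : u ∈ G.neighborFinset v' := by
      rw [SimpleGraph.mem_neighborFinset] at hv'u ⊢
      exact hv'u.symm
    have h1 : psi G v ≤ 1 / (G.degree u : ℝ) := psi_le_of_mindeg_adj hd v u hvmin huv
    have h2 : psi G v' ≤ 1 / (G.degree u : ℝ) := psi_le_of_mindeg_adj hd v' u hv'min huv'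
    have hprod : psi G v * psi G v' ≤ (1 / (G.degree u : ℝ)) ^ 2 := by
      have hv0 := hA v
      have hv'0 := hA v'
      nlinarith
    exact exists_testvec_pair hd v v' u hne (Finset.mem_inter.mpr ⟨huv, huv'⟩) (hA v') hprod
  -- now no vertex has two distinct min-degree neighbors
  obtain ⟨x0, hx0⟩ := G.exists_minimal_degree_vertex
  -- Branch B1 : two distinct neighbors of x0 with ψ ≤ 1/d
  by_cases hB1 : ∃ u ∈ G.neighborFinset x0, ∃ u' ∈ G.neighborFinset x0,
      u ≠ u' ∧ psi G u ≤ 1 / dR ∧ psi G u' ≤ 1 / dR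
  · obtain ⟨u, hu, u', hu', hne, hψu, hψu'⟩ := hB1
    have hdeg : (G.degree x0 : ℝ) = dR := by rw [hdR, hx0]
    have hprod : psi G u * psi G u' ≤ (1 / (G.degree x0 : ℝ)) ^ 2 := by
      rw [hdeg]
      nlinarith [hA u, hA u']
    have hxu : x0 ∈ G.neighborFinset u := by
      rw [SimpleGraph.mem_neighborFinset] at hu ⊢
      exact hu.symm
    have hxu' : x0 ∈ G.neighborFinset u' := by
      rw [SimpleGraph.mem_neighborFinset] at hu' ⊢
      exact hu'.symm
    exact exists_testvec_pair hd u u' x0 hne (Finset.mem_inter.mpr ⟨hxu, hxu'⟩) (hA u') hprod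
  -- Final branch: derive a contradiction
  exfalso
  push_neg at hB1 hB2
  -- every neighbor u of x0 with ψ u > 1/d has degree > d², in fact ≥ d²+1
  have hbig : ∀ u ∈ G.neighborFinset x0, 1 / dR < psi G u →
      (G.minDegree ^ 2 + 1 : ℕ) ≤ G.degree u := by
    intro u hu hψ
    -- all neighbors of u other than x0 have degree ≥ d+1
    have hx0u : x0 ∈ G.neighborFinset u := by
      rw [SimpleGraph.mem_neighborFinset] at hu ⊢
      exact hu.symm
    have hothers : ∀ y ∈ (G.neighborFinset u).erase x0,
        1 / (G.degree y : ℝ) ≤ 1 / (dR + 1) := by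
      intro y hy
      obtain ⟨hyne, hyu⟩ := Finset.mem_erase.mp hy
      have hynotmin : G.degree y ≠ G.minDegree := by
        intro hymin
        exact hB2 u y hyu x0 hx0u hyne hymin hx0.symm
      have : G.minDegree + 1 ≤ G.degree y := by
        have := G.minDegree_le_degree y
        omega
      have hcast : dR + 1 ≤ (G.degree y : ℝ) := by
        rw [hdR]
        exact_mod_cast this
      apply one_div_le_one_div_of_le (by linarith) hcast
    have hrsum : rsum G u ≤ ((G.degree u : ℝ) - 1) * (1 / (dR + 1)) + 1 / dR := by
      unfold rsum
      rw [← Finset.sum_erase_add _ _ hx0u]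
      have hbound := Finset.sum_le_card_nsmul ((G.neighborFinset u).erase x0)
        (fun x => 1 / (G.degree x : ℝ)) (1 / (dR + 1)) hothers
      have hcard : ((G.neighborFinset u).erase x0).card = G.degree u - 1 := by
        rw [Finset.card_erase_of_mem hx0u, G.card_neighborFinset_eq_degree]
      rw [hcard] at hbound
      have hdeg1 : 1 ≤ G.degree u := le_trans (by omega) (G.minDegree_le_degree u)
      have hcast : ((G.degree u - 1 : ℕ) : ℝ) = (G.degree u : ℝ) - 1 := by
        push_cast [hdeg1]
        ring
      have hx0deg : (G.degree x0 : ℝ) = dR := by rw [hdR, hx0]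
      calc _ ≤ (G.degree u - 1) • (1 / (dR + 1)) + 1 / (G.degree x0 : ℝ) :=
            add_le_add hbound le_rfl
      _ = ((G.degree u : ℝ) - 1) * (1 / (dR + 1)) + 1 / dR := by
            rw [nsmul_eq_mul, hcast, hx0deg]
    -- from ψ u > 1/d : deg u > d²
    have hψexp : 1 / dR + c2 * (G.degree u : ℝ) < rsum G u := by
      unfold psi at hψ
      linarith
    rw [hc2] at hψexp
    have hdegu : dR ≤ (G.degree u : ℝ) := mindeg_le_deg u
    have hgt : dR ^ 2 < (G.degree u : ℝ) := by
      have h2 : (dR - 1) * (G.degree u : ℝ) / dR ^ 2 < ((G.degree u : ℝ) - 1) / (dR + 1) := by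
        calc (dR - 1) * (G.degree u : ℝ) / dR ^ 2
            = ((dR - 1) / dR ^ 2) * (G.degree u : ℝ) := by ring
        _ < ((G.degree u : ℝ) - 1) * (1 / (dR + 1)) := by linarith [hψexp, hrsum]
        _ = ((G.degree u : ℝ) - 1) / (dR + 1) := by ring
      rw [div_lt_div_iff₀ (by positivity) (by linarith : (0:ℝ) < dR + 1)] at h2
      nlinarith [h2]
    have : ((G.minDegree ^ 2 : ℕ) : ℝ) < (G.degree u : ℝ) := by
      push_cast
      rw [← hdR] at *
      calc ((G.minDegree:ℝ))^2 = dR ^ 2 := by rw [hdR]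
      _ < _ := hgt
    have : (G.minDegree ^ 2 : ℕ) < G.degree u := by exact_mod_cast this
    omega
  -- split the neighbors of x0 and bound rsum x0
  set E := (G.neighborFinset x0).filter (fun u => psi G u ≤ 1 / dR) with hE
  have hEcard : E.card ≤ 1 := by
    by_contra hcon
    push_neg at hcon
    obtain ⟨a, ha, b, hb, hab⟩ := Finset.one_lt_card.mp hcon
    obtain ⟨ha1, ha2⟩ := Finset.mem_filter.mp ha
    obtain ⟨hb1, hb2⟩ := Finset.mem_filter.mp hb
    exact absurd (hB1 a ha1 b hb1 hab ha2) (not_lt.mpr hb2)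
  have hsplit : rsum G x0 = (∑ u ∈ E, 1 / (G.degree u : ℝ)) +
      ∑ u ∈ (G.neighborFinset x0).filter (fun u => ¬ psi G u ≤ 1 / dR), 1 / (G.degree u : ℝ) := by
    unfold rsum
    rw [hE, Finset.sum_filter_add_sum_filter_not]
  have hEbound : (∑ u ∈ E, 1 / (G.degree u : ℝ)) ≤ 1 / dR := by
    have := Finset.sum_le_card_nsmul E (fun u => 1 / (G.degree u : ℝ)) (1 / dR)
      (fun u _ => by rw [hdR]; exact one_div_deg_le hd0 u)
    calc (∑ u ∈ E, 1 / (G.degree u : ℝ)) ≤ E.card • (1 / dR) := this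
    _ = E.card * (1 / dR) := nsmul_eq_mul _ _
    _ ≤ 1 * (1 / dR) := by
        apply mul_le_mul_of_nonneg_right _ (by positivity)
        exact_mod_cast hEcard
    _ = 1 / dR := one_mul _
  have hRbound : (∑ u ∈ (G.neighborFinset x0).filter (fun u => ¬ psi G u ≤ 1 / dR),
      1 / (G.degree u : ℝ)) ≤ dR * (1 / (dR ^ 2 + 1)) := by
    have hterm : ∀ u ∈ (G.neighborFinset x0).filter (fun u => ¬ psi G u ≤ 1 / dR),
        1 / (G.degree u : ℝ) ≤ 1 / (dR ^ 2 + 1) := by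
      intro u hu
      obtain ⟨hu1, hu2⟩ := Finset.mem_filter.mp hu
      push_neg at hu2
      have := hbig u hu1 hu2
      have hcast : dR ^ 2 + 1 ≤ (G.degree u : ℝ) := by
        have : ((G.minDegree ^ 2 + 1 : ℕ) : ℝ) ≤ (G.degree u : ℝ) := by exact_mod_cast this
        push_cast at this
        rw [← hdR] at this
        linarith [this]
      apply one_div_le_one_div_of_le (by positivity) hcast
    have := Finset.sum_le_card_nsmul _ _ _ hterm
    have hcardle : ((G.neighborFinset x0).filter (fun u => ¬ psi G u ≤ 1 / dR)).card
        ≤ G.minDegree := by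
      calc _ ≤ (G.neighborFinset x0).card := Finset.card_filter_le _ _
      _ = G.degree x0 := G.card_neighborFinset_eq_degree x0
      _ = G.minDegree := hx0.symm
    calc _ ≤ ((G.neighborFinset x0).filter (fun u => ¬ psi G u ≤ 1 / dR)).card
          • (1 / (dR ^ 2 + 1)) := this
    _ = (((G.neighborFinset x0).filter (fun u => ¬ psi G u ≤ 1 / dR)).card : ℝ)
          * (1 / (dR ^ 2 + 1)) := nsmul_eq_mul _ _
    _ ≤ dR * (1 / (dR ^ 2 + 1)) := by
        apply mul_le_mul_of_nonneg_right _ (by positivity)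
        rw [hdR]
        exact_mod_cast hcardle
  -- but ψ x0 > 0 forces rsum x0 > (d-1)/d
  have hψx0 := hA x0
  have hx0deg : (G.degree x0 : ℝ) = dR := by rw [hdR, hx0]
  have hlow : (dR - 1) / dR < rsum G x0 := by
    unfold psi at hψx0
    rw [hx0deg, ← hdR] at hψx0
    have heq : (dR - 1) / dR ^ 2 * dR = (dR - 1) / dR := by
      field_simp
    linarith [hψx0, heq.le, heq.ge]
  have hfinal : rsum G x0 ≤ 1 / dR + dR * (1 / (dR ^ 2 + 1)) := by
    rw [hsplit]
    linarith
  -- arithmetic contradiction for d ≥ 3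
  have : 1 / dR + dR * (1 / (dR ^ 2 + 1)) < (dR - 1) / dR := by
    rw [show dR * (1 / (dR ^ 2 + 1)) = dR / (dR ^ 2 + 1) from by ring]
    rw [div_add_div _ _ (ne_of_gt hdpos) (by positivity), div_lt_div_iff₀ (by positivity) hdpos]
    nlinarith [hd3, mul_nonneg (mul_nonneg hdpos.le hdpos.le) (by linarith : (0:ℝ) ≤ dR - 3)]
  linarith

/-- auxiliary: multiplication by a real-orthogonal matrix preserves the dot square. -/
lemma dot_sq_of_orth (M : Matrix V V ℝ) (hM : Mᵀ * M = 1) (z : V → ℝ) :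
    (M *ᵥ z) ⬝ᵥ (M *ᵥ z) = z ⬝ᵥ z := by
  rw [Matrix.dotProduct_mulVec, ← Matrix.mulVec_transpose, Matrix.mulVec_mulVec, hM,
    Matrix.one_mulVec]

noncomputable def normB (G : SimpleGraph V) [DecidableRel G.Adj] : Matrix V V ℝ :=
  fun x y => (G.adjMatrix ℝ) x y / (Real.sqrt (G.degree x : ℝ) * Real.sqrt (G.degree y : ℝ))

lemma normB_isHermitian : (normB G).IsHermitian := by
  unfold Matrix.IsHermitian
  ext x y
  simp only [Matrix.conjTranspose_apply, star_trivial, normB, SimpleGraph.adjMatrix_apply]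
  rw [mul_comm (Real.sqrt (G.degree y : ℝ))]
  congr 1
  exact if_congr (G.adj_comm y x) rfl rfl

theorem exists_eig_of_testvec' [Nonempty V] (hd : 0 < G.minDegree) (γ : ℝ)
    (h : V → ℝ) (hh : h ≠ 0)
    (hQ : ∑ x, (∑ w ∈ G.neighborFinset x, h w) ^ 2 / (G.degree x : ℝ) ≤
      γ * ∑ v, (G.degree v : ℝ) * h v ^ 2) :
    ∃ μ : ℝ, normLapEigenvalue G μ ∧ |1 - μ| ≤ Real.sqrt γ := by
  have hdeg : ∀ v : V, (0:ℝ) < (G.degree v : ℝ) := deg_pos hd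
  have hsq : ∀ v : V, (0:ℝ) < Real.sqrt (G.degree v : ℝ) :=
    fun v => Real.sqrt_pos.mpr (hdeg v)
  set B := normB G with hBdef
  have hB : B.IsHermitian := normB_isHermitian
  set ν := hB.eigenvalues with hν
  set U := (Matrix.IsHermitian.eigenvectorUnitary hB : Matrix V V ℝ) with hU
  have hU1 : star U * U = 1 := Unitary.coe_star_mul_self _
  have hU2 : U * star U = 1 := Unitary.coe_mul_star_self _
  have hstarU : star U = Uᵀ := by
    rw [Matrix.star_eq_conjTranspose, Matrix.conjTranspose_eq_transpose_of_trivial]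
  have hUB : B * U = U * Matrix.diagonal ν := by
    ext v i
    have hcol := congrFun (hB.mulVec_eigenvectorBasis i) v
    calc (B * U) v i = (B *ᵥ ⇑(hB.eigenvectorBasis i)) v := by
          simp only [Matrix.mul_apply, Matrix.mulVec, dotProduct, hU]
          rfl
    _ = (ν i • ⇑(hB.eigenvectorBasis i)) v := by rw [hB.mulVec_eigenvectorBasis i]
    _ = (U * Matrix.diagonal ν) v i := by
          rw [Matrix.mul_diagonal, hU]
          simp only [Matrix.IsHermitian.eigenvectorUnitary_apply, Pi.smul_apply, smul_eq_mul]
          ring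
  -- the weighted test vector
  set g : V → ℝ := fun v => Real.sqrt (G.degree v : ℝ) * h v with hg
  have hgne : ∃ v, g v ≠ 0 := by
    by_contra hcon
    push_neg at hcon
    apply hh
    funext v
    have := hcon v
    rw [hg] at this
    simp only [mul_eq_zero] at this
    rcases this with h1 | h1
    · exact absurd h1 (ne_of_gt (hsq v))
    · exact h1
  have hBg : ∀ x, (B *ᵥ g) x = (∑ w ∈ G.neighborFinset x, h w) / Real.sqrt (G.degree x : ℝ) := by
    intro x
    have : ∀ y, B x y * g y = (G.adjMatrix ℝ) x y * h y / Real.sqrt (G.degree x : ℝ) := by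
      intro y
      rw [hBdef, hg]
      show (G.adjMatrix ℝ) x y / (Real.sqrt (G.degree x : ℝ) * Real.sqrt (G.degree y : ℝ))
          * (Real.sqrt (G.degree y : ℝ) * h y) = _
      have h1 : Real.sqrt (G.degree x : ℝ) ≠ 0 := ne_of_gt (hsq x)
      have h2 : Real.sqrt (G.degree y : ℝ) ≠ 0 := ne_of_gt (hsq y)
      generalize (G.adjMatrix ℝ) x y = a
      field_simp
    calc (B *ᵥ g) x = ∑ y, B x y * g y := rfl
    _ = ∑ y, (G.adjMatrix ℝ) x y * h y / Real.sqrt (G.degree x : ℝ) :=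
        Finset.sum_congr rfl (fun y _ => this y)
    _ = (∑ y, (G.adjMatrix ℝ) x y * h y) / Real.sqrt (G.degree x : ℝ) := by
        rw [Finset.sum_div]
    _ = (∑ w ∈ G.neighborFinset x, h w) / Real.sqrt (G.degree x : ℝ) := by
        rw [← SimpleGraph.adjMatrix_dotProduct G x h]
        rfl
  have hBg2 : ∑ x, ((B *ᵥ g) x) ^ 2 = ∑ x, (∑ w ∈ G.neighborFinset x, h w) ^ 2 / (G.degree x : ℝ) := by
    apply Finset.sum_congr rfl
    intro x _
    rw [hBg x, div_pow, Real.sq_sqrt (le_of_lt (hdeg x))]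
  have hg2 : ∑ v, (g v) ^ 2 = ∑ v, (G.degree v : ℝ) * h v ^ 2 := by
    apply Finset.sum_congr rfl
    intro v _
    rw [hg]
    show (Real.sqrt (G.degree v : ℝ) * h v) ^ 2 = _
    rw [mul_pow, Real.sq_sqrt (le_of_lt (hdeg v))]
  -- there is an eigenvalue with ν² ≤ γ
  have hex : ∃ i, (ν i) ^ 2 ≤ γ := by
    by_contra hcon
    push_neg at hcon
    set c : V → ℝ := star U *ᵥ g with hc
    have hP1 : ∑ i, (c i) ^ 2 = ∑ v, (g v) ^ 2 := by
      have horth : (star U)ᵀ * star U = 1 := by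
        rw [hstarU, Matrix.transpose_transpose, ← hstarU, hU2]
      have := dot_sq_of_orth (star U) horth g
      rw [← hc] at this
      simpa [dotProduct, pow_two] using this
    have hgU : U *ᵥ c = g := by
      rw [hc, Matrix.mulVec_mulVec, hU2, Matrix.one_mulVec]
    have hP3 : B *ᵥ g = U *ᵥ (fun i => ν i * c i) := by
      have hdiag : Matrix.diagonal ν *ᵥ c = fun i => ν i * c i :=
        funext (fun i => Matrix.mulVec_diagonal ν c i)
      rw [← hgU, Matrix.mulVec_mulVec, hUB, ← Matrix.mulVec_mulVec, hdiag]
    have hP4 : ∑ x, ((B *ᵥ g) x) ^ 2 = ∑ i, (ν i * c i) ^ 2 := by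
      rw [hP3]
      have horth : Uᵀ * U = 1 := by rw [← hstarU, hU1]
      have := dot_sq_of_orth U horth (fun i => ν i * c i)
      simpa [dotProduct, pow_two] using this
    have hgpos : 0 < ∑ v, (g v) ^ 2 := by
      obtain ⟨v0, hv0⟩ := hgne
      apply Finset.sum_pos' (fun v _ => sq_nonneg _)
      exact ⟨v0, Finset.mem_univ v0, by positivity⟩
    have hcex : ∃ i, c i ≠ 0 := by
      by_contra hcon2
      push_neg at hcon2
      have : ∑ i, (c i) ^ 2 = 0 := by
        apply Finset.sum_eq_zero
        intro i _
        rw [hcon2 i]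
        ring
      rw [hP1] at this
      linarith
    obtain ⟨i0, hi0⟩ := hcex
    have hstrict : γ * ∑ i, (c i) ^ 2 < ∑ i, (ν i * c i) ^ 2 := by
      rw [Finset.mul_sum]
      apply Finset.sum_lt_sum
      · intro i _
        rw [mul_pow]
        exact mul_le_mul_of_nonneg_right (le_of_lt (hcon i)) (sq_nonneg _)
      · refine ⟨i0, Finset.mem_univ i0, ?_⟩
        rw [mul_pow]
        apply mul_lt_mul_of_pos_right (hcon i0)
        exact lt_of_le_of_ne (sq_nonneg _) (Ne.symm (pow_ne_zero 2 hi0))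
    have hle : ∑ x, ((B *ᵥ g) x) ^ 2 ≤ γ * ∑ v, (g v) ^ 2 := by
      rw [hBg2, hg2]
      exact hQ
    rw [hP4, ← hP1] at hle
    linarith
  obtain ⟨i, hν2⟩ := hex
  -- extract the eigenfunction
  set w : V → ℝ := ⇑(hB.eigenvectorBasis i) with hw
  have hwne : ∃ v, w v ≠ 0 := by
    by_contra hcon
    push_neg at hcon
    apply hB.eigenvectorBasis.orthonormal.ne_zero i
    ext v
    exact hcon v
  set f : V → ℝ := fun v => w v / Real.sqrt (G.degree v : ℝ) with hf
  have hfne : f ≠ 0 := by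
    obtain ⟨v0, hv0⟩ := hwne
    intro hcon
    have := congrFun hcon v0
    rw [hf] at this
    simp only [Pi.zero_apply] at this
    rcases div_eq_zero_iff.mp this with h1 | h1
    · exact hv0 h1
    · exact absurd h1 (ne_of_gt (hsq v0))
  refine ⟨1 - ν i, ⟨f, hfne, ?_⟩, ?_⟩
  · intro v
    have hcol := congrFun (hB.mulVec_eigenvectorBasis i) v
    have hBw : (B *ᵥ w) v = ν i * w v := by
      rw [hw]
      rw [show (B *ᵥ ⇑(hB.eigenvectorBasis i)) v = (ν i • ⇑(hB.eigenvectorBasis i)) v from hcol]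
      rfl
    have hBw2 : (B *ᵥ w) v = (∑ y ∈ G.neighborFinset v, f y) / Real.sqrt (G.degree v : ℝ) := by
      have : ∀ y, B v y * w y = (G.adjMatrix ℝ) v y * f y / Real.sqrt (G.degree v : ℝ) := by
        intro y
        rw [hBdef, hf]
        show (G.adjMatrix ℝ) v y / (Real.sqrt (G.degree v : ℝ) * Real.sqrt (G.degree y : ℝ))
            * w y = (G.adjMatrix ℝ) v y * (w y / Real.sqrt (G.degree y : ℝ))
            / Real.sqrt (G.degree v : ℝ)
        have h1 : Real.sqrt (G.degree v : ℝ) ≠ 0 := ne_of_gt (hsq v)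
        have h2 : Real.sqrt (G.degree y : ℝ) ≠ 0 := ne_of_gt (hsq y)
        generalize (G.adjMatrix ℝ) v y = a
        field_simp
      calc (B *ᵥ w) v = ∑ y, B v y * w y := rfl
      _ = ∑ y, (G.adjMatrix ℝ) v y * f y / Real.sqrt (G.degree v : ℝ) :=
          Finset.sum_congr rfl (fun y _ => this y)
      _ = (∑ y, (G.adjMatrix ℝ) v y * f y) / Real.sqrt (G.degree v : ℝ) := by
          rw [Finset.sum_div]
      _ = (∑ y ∈ G.neighborFinset v, f y) / Real.sqrt (G.degree v : ℝ) := by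
          rw [← SimpleGraph.adjMatrix_dotProduct G v f]
          rfl
    have hkey : ∑ y ∈ G.neighborFinset v, f y = ν i * (G.degree v : ℝ) * f v := by
      have h1 : (∑ y ∈ G.neighborFinset v, f y) / Real.sqrt (G.degree v : ℝ) = ν i * w v := by
        rw [← hBw2, hBw]
      have h2 : w v = Real.sqrt (G.degree v : ℝ) * f v := by
        rw [hf]
        show w v = Real.sqrt (G.degree v : ℝ) * (w v / Real.sqrt (G.degree v : ℝ))
        rw [mul_comm, div_mul_cancel₀ _ (ne_of_gt (hsq v))]
      rw [h2] at h1
      have h3 := congrArg (· * Real.sqrt (G.degree v : ℝ)) h1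
      rw [div_mul_cancel₀ _ (ne_of_gt (hsq v))] at h3
      rw [h3]
      rw [show ν i * (Real.sqrt (G.degree v : ℝ) * f v) * Real.sqrt (G.degree v : ℝ)
          = ν i * (Real.sqrt (G.degree v : ℝ) * Real.sqrt (G.degree v : ℝ)) * f v from by ring]
      rw [Real.mul_self_sqrt (le_of_lt (hdeg v))]
    rw [hkey]
    have hdv : (G.degree v : ℝ) ≠ 0 := ne_of_gt (hdeg v)
    have : ν i * (G.degree v : ℝ) * f v / (G.degree v : ℝ) = ν i * f v := by
      field_simp
    rw [this]
    ring
  · rw [show (1 : ℝ) - (1 - ν i) = ν i by ring]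
    rw [← Real.sqrt_sq_eq_abs]
    exact Real.sqrt_le_sqrt hν2

end SpecGapAux


end AuxNS

/-- For any connected finite simple graph on `N ≥ 3` vertices whose smallest vertex
degree `d` satisfies `d ≥ 3`, the spectral gap from `1` satisfies
`ε ≤ √(d-1)/d`, and moreover `√(d-1)/d < 1/2`. -/
theorem specGapOne_le_sqrt_of_three_le_minDegree {V : Type*} [Fintype V] [Nonempty V]
    (G : SimpleGraph V) [DecidableRel G.Adj]
    (hconn : G.Connected) (hN : 3 ≤ Fintype.card V) (hd : 3 ≤ G.minDegree) :
    specGapOne G ≤ Real.sqrt ((G.minDegree : ℝ) - 1) / (G.minDegree : ℝ) ∧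
      Real.sqrt ((G.minDegree : ℝ) - 1) / (G.minDegree : ℝ) < 1 / 2 := by
  letI : DecidableEq V := Classical.decEq V
  have hd0 : 0 < G.minDegree := by omega
  have hd3 : (3 : ℝ) ≤ (G.minDegree : ℝ) := by exact_mod_cast hd
  have hdpos : (0 : ℝ) < (G.minDegree : ℝ) := by linarith
  set d : ℝ := (G.minDegree : ℝ) with hdd
  have hsqrt : Real.sqrt ((d - 1) / d ^ 2) = Real.sqrt (d - 1) / d := by
    rw [Real.sqrt_div (by linarith : (0:ℝ) ≤ d - 1), Real.sqrt_sq (le_of_lt hdpos)]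
  constructor
  · obtain ⟨h, hh, hQ⟩ := SpecGapAux.exists_testvec' hd
    obtain ⟨μ, hμ, hle⟩ := SpecGapAux.exists_eig_of_testvec' hd0 _ h hh hQ
    have hbdd : BddBelow {x : ℝ | ∃ μ : ℝ, normLapEigenvalue G μ ∧ x = |1 - μ|} := by
      refine ⟨0, ?_⟩
      rintro x ⟨μ', _, rfl⟩
      positivity
    have h2 : specGapOne G ≤ |1 - μ| := csInf_le hbdd ⟨μ, hμ, rfl⟩
    rw [← hsqrt]
    exact h2.trans hle
  · have h1 : Real.sqrt (d - 1) < d / 2 := by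
      have h0 : (0:ℝ) < d / 2 := by linarith
      rw [Real.sqrt_lt' h0]
      nlinarith
    have h2 : Real.sqrt (d - 1) / d < (d / 2) / d :=
      div_lt_div_of_pos_right h1 hdpos
    have h3 : (d / 2) / d = 1 / 2 := by field_simp
    linarith
end

section
/- For every m ≥ 1, the normalized Laplacian of the m-book graph on N = 2m+2 vertices has eigenvalues 0 (with multiplicity 1), 1/2 (with multiplicity m), 3/2 (with multiplicity m), and 2 (with multiplicity 1). -/
open Finset

/-- The normalized Laplacian matrix of `G`: `Δ = I - D⁻¹ A`, with entries
`Δ u v = δ_{uv} - (if u ∼ v then 1/deg u else 0)`. -/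
noncomputable def normLapMatrix {V : Type*} [Fintype V] [DecidableEq V] (G : SimpleGraph V)
    [DecidableRel G.Adj] : Matrix V V ℝ :=
  Matrix.of fun u v =>
    (if u = v then 1 else 0) - (if G.Adj u v then 1 / (G.degree u : ℝ) else 0)

/-- The multiplicity of `μ` as an eigenvalue of the normalized Laplacian of `G`, i.e.
the dimension of the eigenspace `{f : V → ℝ | Δ f = μ • f}`. -/
noncomputable def normLapMult {V : Type*} [Fintype V] [DecidableEq V] (G : SimpleGraph V)
    [DecidableRel G.Adj] (μ : ℝ) : ℕ :=
  Module.finrank ℝ (Module.End.eigenspace (Matrix.toLin' (normLapMatrix G)) μ)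

/-- The `m`-book graph on `N = 2m+2` vertices: `Sum.inl false` is `x`, `Sum.inl true` is `y`,
`Sum.inr (i, false)` is `vᵢ` and `Sum.inr (i, true)` is `wᵢ`; the edges are
`x ∼ vᵢ`, `y ∼ wᵢ` and `vᵢ ∼ wᵢ` for `i = 1, …, m`. -/
def bookGraph (m : ℕ) : SimpleGraph (Bool ⊕ (Fin m × Bool)) :=
  SimpleGraph.fromRel (fun a b =>
    (∃ (i : Fin m) (c : Bool), a = Sum.inl c ∧ b = Sum.inr (i, c)) ∨
    (∃ i : Fin m, a = Sum.inr (i, false) ∧ b = Sum.inr (i, true)))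

noncomputable instance (m : ℕ) : DecidableRel (bookGraph m).Adj := Classical.decRel _

section BookGraphAux

variable {m : ℕ}

lemma adj_ll (c c' : Bool) : ¬ (bookGraph m).Adj (.inl c) (.inl c') := by
  simp [bookGraph]

lemma adj_lr (c : Bool) (i : Fin m) (c' : Bool) :
    (bookGraph m).Adj (.inl c) (.inr (i, c')) ↔ c = c' := by
  cases c <;> cases c' <;> simp [bookGraph] <;> exact ⟨i, by simp⟩

lemma adj_rl (c : Bool) (i : Fin m) (c' : Bool) :
    (bookGraph m).Adj (.inr (i, c)) (.inl c') ↔ c = c' := by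
  rw [SimpleGraph.adj_comm, adj_lr]; exact eq_comm

lemma adj_rr (i j : Fin m) (c c' : Bool) :
    (bookGraph m).Adj (.inr (i, c)) (.inr (j, c')) ↔ i = j ∧ c ≠ c' := by
  cases c <;> cases c' <;> simp [bookGraph] <;> aesop
variable {m : ℕ}

lemma deg_l (c : Bool) : (bookGraph m).degree (.inl c) = m := by
  have : (bookGraph m).neighborFinset (.inl c) = univ.image (fun i : Fin m => Sum.inr (i, c)) := by
    ext v
    rcases v with c' | ⟨i, c'⟩ <;>
      simp [SimpleGraph.mem_neighborFinset, adj_ll, adj_lr, eq_comm]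
  rw [SimpleGraph.degree, this, Finset.card_image_of_injective _ (fun a b h => by
    simpa using h)]
  simp

lemma deg_r (i : Fin m) (c : Bool) : (bookGraph m).degree (.inr (i, c)) = 2 := by
  have : (bookGraph m).neighborFinset (.inr (i, c)) = {Sum.inl c, Sum.inr (i, !c)} := by
    ext v
    rcases v with c' | ⟨j, c'⟩ <;>
      simp [SimpleGraph.mem_neighborFinset, adj_rl, adj_rr, eq_comm] <;>
      cases c <;> cases c' <;> simp_all
  rw [SimpleGraph.degree, this]
  simp

variable {m : ℕ}

lemma mulVec_l (c : Bool) (f : Bool ⊕ (Fin m × Bool) → ℝ) :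
    (normLapMatrix (bookGraph m)).mulVec f (.inl c) =
      f (.inl c) - (1 / m) * ∑ i : Fin m, f (.inr (i, c)) := by
  simp only [normLapMatrix, Matrix.mulVec, dotProduct, Matrix.of_apply, sub_mul,
    Finset.sum_sub_distrib, Fintype.sum_sum_type, Fintype.sum_prod_type]
  simp [adj_ll, adj_lr, deg_l, Fintype.sum_bool, ite_mul, Finset.mul_sum, mul_comm]

lemma mulVec_r (i : Fin m) (c : Bool) (f : Bool ⊕ (Fin m × Bool) → ℝ) :
    (normLapMatrix (bookGraph m)).mulVec f (.inr (i, c)) =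
      f (.inr (i, c)) - (f (.inl c) + f (.inr (i, !c))) / 2 := by
  simp only [normLapMatrix, Matrix.mulVec, dotProduct, Matrix.of_apply, sub_mul,
    Finset.sum_sub_distrib, Fintype.sum_sum_type, Fintype.sum_prod_type]
  rw [Finset.sum_eq_single i]
  · cases c <;> simp [adj_rl, adj_rr, deg_r, Fintype.sum_bool] <;> ring
  · intro j _ hj
    cases c <;> simp [adj_rr, hj, Ne.symm hj, Fintype.sum_bool]
  · simp

lemma mem_eig_iff (hm : 1 ≤ m) (μ : ℝ) (f : Bool ⊕ (Fin m × Bool) → ℝ) :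
    f ∈ Module.End.eigenspace (Matrix.toLin' (normLapMatrix (bookGraph m))) μ ↔
      ((1 - μ) * f (.inl false) = (1 / m) * ∑ i : Fin m, f (.inr (i, false))) ∧
      ((1 - μ) * f (.inl true) = (1 / m) * ∑ i : Fin m, f (.inr (i, true))) ∧
      (∀ i : Fin m, (1 - μ) * f (.inr (i, false)) = (f (.inl false) + f (.inr (i, true))) / 2) ∧
      (∀ i : Fin m, (1 - μ) * f (.inr (i, true)) = (f (.inl true) + f (.inr (i, false))) / 2) := by
  rw [Module.End.mem_eigenspace_iff]
  constructor
  · intro h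
    have h' : ∀ u, (normLapMatrix (bookGraph m)).mulVec f u = μ * f u := by
      intro u
      have := congrFun h u
      simpa [Matrix.toLin'_apply] using this
    refine ⟨?_, ?_, fun i => ?_, fun i => ?_⟩
    · have := h' (.inl false); rw [mulVec_l] at this; linarith
    · have := h' (.inl true); rw [mulVec_l] at this; linarith
    · have := h' (.inr (i, false)); rw [mulVec_r] at this; simp at this; linarith
    · have := h' (.inr (i, true)); rw [mulVec_r] at this; simp at this; linarith
  · rintro ⟨h1, h2, h3, h4⟩
    funext u
    rw [Matrix.toLin'_apply]
    rcases u with c | ⟨i, c⟩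
    · cases c
      · rw [mulVec_l]; simp only [Pi.smul_apply, smul_eq_mul]; linarith
      · rw [mulVec_l]; simp only [Pi.smul_apply, smul_eq_mul]; linarith
    · cases c
      · rw [mulVec_r]; simp only [Pi.smul_apply, smul_eq_mul, Bool.not_false]
        have := h3 i; linarith
      · rw [mulVec_r]; simp only [Pi.smul_apply, smul_eq_mul, Bool.not_true]
        have := h4 i; linarith

variable (m) in
noncomputable def sumF : (Fin m → ℝ) →ₗ[ℝ] ℝ := ∑ i, LinearMap.proj i

@[simp] lemma sumF_apply (t : Fin m → ℝ) : sumF m t = ∑ i, t i := by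
  simp [sumF]

variable (m) in
/-- constant functions: eigenvectors for 0 -/
noncomputable def Phi0 : ℝ →ₗ[ℝ] (Bool ⊕ (Fin m × Bool) → ℝ) :=
  LinearMap.pi fun _ => LinearMap.id

@[simp] lemma Phi0_apply (a : ℝ) (u) : Phi0 m a u = a := rfl

variable (m) in
/-- eigenvectors for 2 -/
noncomputable def Phi2 : ℝ →ₗ[ℝ] (Bool ⊕ (Fin m × Bool) → ℝ) :=
  LinearMap.pi fun u => match u with
    | .inl false => LinearMap.id
    | .inl true => -LinearMap.id
    | .inr (_, false) => -LinearMap.id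
    | .inr (_, true) => LinearMap.id

@[simp] lemma Phi2_lf (a : ℝ) : Phi2 m a (.inl false) = a := rfl
@[simp] lemma Phi2_lt (a : ℝ) : Phi2 m a (.inl true) = -a := rfl
@[simp] lemma Phi2_rf (a : ℝ) (i : Fin m) : Phi2 m a (.inr (i, false)) = -a := rfl
@[simp] lemma Phi2_rt (a : ℝ) (i : Fin m) : Phi2 m a (.inr (i, true)) = a := rfl

variable (m) in
/-- eigenvectors for 1/2 -/
noncomputable def PhiH : (Fin m → ℝ) →ₗ[ℝ] (Bool ⊕ (Fin m × Bool) → ℝ) :=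
  LinearMap.pi fun u => match u with
    | .inl false => (2 / m : ℝ) • sumF m
    | .inl true => -((2 / m : ℝ) • sumF m)
    | .inr (i, false) => LinearMap.proj i
    | .inr (i, true) => LinearMap.proj i - (2 / m : ℝ) • sumF m

@[simp] lemma PhiH_lf (t : Fin m → ℝ) : PhiH m t (.inl false) = (2 / m) * ∑ i, t i := by
  simp [PhiH, LinearMap.pi_apply]
@[simp] lemma PhiH_lt (t : Fin m → ℝ) : PhiH m t (.inl true) = -((2 / m) * ∑ i, t i) := by
  simp [PhiH, LinearMap.pi_apply]
@[simp] lemma PhiH_rf (t : Fin m → ℝ) (i : Fin m) : PhiH m t (.inr (i, false)) = t i := rfl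
@[simp] lemma PhiH_rt (t : Fin m → ℝ) (i : Fin m) :
    PhiH m t (.inr (i, true)) = t i - (2 / m) * ∑ i, t i := by
  simp [PhiH, LinearMap.pi_apply]

variable (m) in
/-- eigenvectors for 3/2 -/
noncomputable def PhiT : (Fin m → ℝ) →ₗ[ℝ] (Bool ⊕ (Fin m × Bool) → ℝ) :=
  LinearMap.pi fun u => match u with
    | .inl false => -((2 / m : ℝ) • sumF m)
    | .inl true => -((2 / m : ℝ) • sumF m)
    | .inr (i, false) => LinearMap.proj i
    | .inr (i, true) => (2 / m : ℝ) • sumF m - LinearMap.proj i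

@[simp] lemma PhiT_lf (t : Fin m → ℝ) : PhiT m t (.inl false) = -((2 / m) * ∑ i, t i) := by
  simp [PhiT, LinearMap.pi_apply]
@[simp] lemma PhiT_lt (t : Fin m → ℝ) : PhiT m t (.inl true) = -((2 / m) * ∑ i, t i) := by
  simp [PhiT, LinearMap.pi_apply]
@[simp] lemma PhiT_rf (t : Fin m → ℝ) (i : Fin m) : PhiT m t (.inr (i, false)) = t i := rfl
@[simp] lemma PhiT_rt (t : Fin m → ℝ) (i : Fin m) :
    PhiT m t (.inr (i, true)) = (2 / m) * (∑ i, t i) - t i := by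
  simp [PhiT, LinearMap.pi_apply]

lemma phi0_inj : Function.Injective (Phi0 m) := fun a b h => congrFun h (.inl false)
lemma phi2_inj : Function.Injective (Phi2 m) := fun a b h => congrFun h (.inl false)
lemma phiH_inj : Function.Injective (PhiH m) := fun a b h => by
  funext i; exact congrFun h (.inr (i, false))
lemma phiT_inj : Function.Injective (PhiT m) := fun a b h => by
  funext i; exact congrFun h (.inr (i, false))

lemma hm0 (hm : 1 ≤ m) : (m : ℝ) ≠ 0 := Nat.cast_ne_zero.mpr (by omega)

lemma eig0 (hm : 1 ≤ m) :
    Module.End.eigenspace (Matrix.toLin' (normLapMatrix (bookGraph m))) 0 =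
      LinearMap.range (Phi0 m) := by
  have hm' := hm0 hm
  ext f
  rw [mem_eig_iff hm, LinearMap.mem_range]
  constructor
  · rintro ⟨h1, h2, h3, h4⟩
    set a := f (.inl false) with ha
    set b := f (.inl true) with hb
    have hv : ∀ i, f (.inr (i, false)) = (2 * a + b) / 3 := fun i => by
      have e3 := h3 i; have e4 := h4 i; linarith
    have hw : ∀ i, f (.inr (i, true)) = (a + 2 * b) / 3 := fun i => by
      have e3 := h3 i; have e4 := h4 i; linarith
    rw [Finset.sum_congr rfl (fun i _ => hv i), Finset.sum_const, card_univ,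
      Fintype.card_fin, nsmul_eq_mul] at h1
    have hab : a = b := by
      have hc : (1:ℝ)/m * (m * ((2 * a + b) / 3)) = (2 * a + b) / 3 := by field_simp
      rw [hc] at h1; linarith
    refine ⟨a, funext fun u => ?_⟩
    rcases u with (_|_) | ⟨i, (_|_)⟩
    · simp [← ha]
    · simp [← hb, hab]
    · rw [Phi0_apply, hv i]; linarith
    · rw [Phi0_apply, hw i]; linarith
  · rintro ⟨a, rfl⟩
    refine ⟨?_, ?_, fun i => ?_, fun i => ?_⟩
    · simp only [Phi0_apply, Finset.sum_const, card_univ, Fintype.card_fin,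
        nsmul_eq_mul]
      field_simp
      ring
    · simp only [Phi0_apply, Finset.sum_const, card_univ, Fintype.card_fin,
        nsmul_eq_mul]
      field_simp
      ring
    · simp only [Phi0_apply]; ring
    · simp only [Phi0_apply]; ring

lemma eig2 (hm : 1 ≤ m) :
    Module.End.eigenspace (Matrix.toLin' (normLapMatrix (bookGraph m))) 2 =
      LinearMap.range (Phi2 m) := by
  have hm' := hm0 hm
  ext f
  rw [mem_eig_iff hm, LinearMap.mem_range]
  constructor
  · rintro ⟨h1, h2, h3, h4⟩
    set a := f (.inl false) with ha
    set b := f (.inl true) with hb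
    have hv : ∀ i, f (.inr (i, false)) = (-2 * a + b) / 3 := fun i => by
      have e3 := h3 i; have e4 := h4 i; linarith
    have hw : ∀ i, f (.inr (i, true)) = (a - 2 * b) / 3 := fun i => by
      have e3 := h3 i; have e4 := h4 i; linarith
    rw [Finset.sum_congr rfl (fun i _ => hv i), Finset.sum_const, card_univ,
      Fintype.card_fin, nsmul_eq_mul] at h1
    have hab : b = -a := by
      have hc : (1:ℝ)/m * (m * ((-2 * a + b) / 3)) = (-2 * a + b) / 3 := by field_simp
      rw [hc] at h1; linarith
    refine ⟨a, funext fun u => ?_⟩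
    rcases u with (_|_) | ⟨i, (_|_)⟩
    · simp [← ha]
    · simp [← hb, hab]
    · rw [Phi2_rf, hv i]; linarith
    · rw [Phi2_rt, hw i]; linarith
  · rintro ⟨a, rfl⟩
    refine ⟨?_, ?_, fun i => ?_, fun i => ?_⟩
    · simp only [Phi2_lf, Phi2_rf, Finset.sum_const, card_univ, Fintype.card_fin,
        nsmul_eq_mul]
      field_simp
      ring
    · simp only [Phi2_lt, Phi2_rt, Finset.sum_const, card_univ, Fintype.card_fin,
        nsmul_eq_mul]
      field_simp
      ring
    · simp only [Phi2_rf, Phi2_lf, Phi2_rt]; ring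
    · simp only [Phi2_rt, Phi2_lt, Phi2_rf]; ring

lemma eigH (hm : 1 ≤ m) :
    Module.End.eigenspace (Matrix.toLin' (normLapMatrix (bookGraph m))) (1/2) =
      LinearMap.range (PhiH m) := by
  have hm' := hm0 hm
  ext f
  rw [mem_eig_iff hm, LinearMap.mem_range]
  constructor
  · rintro ⟨h1, h2, h3, h4⟩
    set a := f (.inl false) with ha
    set b := f (.inl true) with hb
    have hw : ∀ i, f (.inr (i, true)) = f (.inr (i, false)) - a := fun i => by
      have e3 := h3 i; linarith
    have hba : b = -a := by
      have i0 : Fin m := ⟨0, hm⟩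
      have e4 := h4 i0; rw [hw i0] at e4; linarith
    have hs : (2 / m) * ∑ i, f (.inr (i, false)) = a := by
      have e : (2:ℝ)/m * ∑ i, f (.inr (i, false)) =
          2 * ((1/m) * ∑ i, f (.inr (i, false))) := by ring
      rw [e, ← h1]; ring
    refine ⟨fun i => f (.inr (i, false)), funext fun u => ?_⟩
    rcases u with (_|_) | ⟨i, (_|_)⟩
    · rw [PhiH_lf, hs, ha]
    · rw [PhiH_lt, hs, ← hb, hba]
    · rfl
    · rw [PhiH_rt, hs, hw i]
  · rintro ⟨t, rfl⟩
    have hsum : ∑ i : Fin m, (t i - 2 / ↑m * ∑ j, t j) =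
        (∑ i, t i) - 2 * ∑ i, t i := by
      rw [Finset.sum_sub_distrib, Finset.sum_const, card_univ, Fintype.card_fin,
        nsmul_eq_mul]
      field_simp
    refine ⟨?_, ?_, fun i => ?_, fun i => ?_⟩
    · simp only [PhiH_lf, PhiH_rf]; ring
    · simp only [PhiH_lt, PhiH_rt]; rw [hsum]; ring
    · simp only [PhiH_rf, PhiH_lf, PhiH_rt]; ring
    · simp only [PhiH_rt, PhiH_lt, PhiH_rf]; ring

lemma eigT (hm : 1 ≤ m) :
    Module.End.eigenspace (Matrix.toLin' (normLapMatrix (bookGraph m))) (3/2) =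
      LinearMap.range (PhiT m) := by
  have hm' := hm0 hm
  ext f
  rw [mem_eig_iff hm, LinearMap.mem_range]
  constructor
  · rintro ⟨h1, h2, h3, h4⟩
    set a := f (.inl false) with ha
    set b := f (.inl true) with hb
    have hw : ∀ i, f (.inr (i, true)) = -a - f (.inr (i, false)) := fun i => by
      have e3 := h3 i; linarith
    have hba : b = a := by
      have i0 : Fin m := ⟨0, hm⟩
      have e4 := h4 i0; rw [hw i0] at e4; linarith
    have hs : (2 / m) * ∑ i, f (.inr (i, false)) = -a := by
      have e : (2:ℝ)/m * ∑ i, f (.inr (i, false)) =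
          2 * ((1/m) * ∑ i, f (.inr (i, false))) := by ring
      rw [e, ← h1]; ring
    refine ⟨fun i => f (.inr (i, false)), funext fun u => ?_⟩
    rcases u with (_|_) | ⟨i, (_|_)⟩
    · rw [PhiT_lf, hs, ha]; ring
    · rw [PhiT_lt, hs, ← hb, hba]; ring
    · rfl
    · rw [PhiT_rt, hs, hw i]
  · rintro ⟨t, rfl⟩
    have hsum : ∑ i : Fin m, (2 / ↑m * (∑ j, t j) - t i) =
        (2 * ∑ i, t i) - ∑ i, t i := by
      rw [Finset.sum_sub_distrib, Finset.sum_const, card_univ, Fintype.card_fin,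
        nsmul_eq_mul]
      field_simp
    refine ⟨?_, ?_, fun i => ?_, fun i => ?_⟩
    · simp only [PhiT_lf, PhiT_rf]; ring
    · simp only [PhiT_lt, PhiT_rt]; rw [hsum]; ring
    · simp only [PhiT_rf, PhiT_lf, PhiT_rt]; ring
    · simp only [PhiT_rt, PhiT_lt, PhiT_rf]; ring


end BookGraphAux

/-- The normalized Laplacian of the `m`-book graph (`m ≥ 1`) on `N = 2m+2` vertices has
eigenvalues `0` with multiplicity `1`, `1/2` with multiplicity `m`, `3/2` with
multiplicity `m`, and `2` with multiplicity `1` (these multiplicities sum to `N`,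
so there are no other eigenvalues). -/
theorem bookGraph_normLap_spectrum (m : ℕ) (hm : 1 ≤ m) :
    normLapMult (bookGraph m) 0 = 1 ∧
    normLapMult (bookGraph m) (1 / 2) = m ∧
    normLapMult (bookGraph m) (3 / 2) = m ∧
    normLapMult (bookGraph m) 2 = 1 := by
  refine ⟨?_, ?_, ?_, ?_⟩
  · rw [normLapMult, eig0 hm, LinearMap.finrank_range_of_inj phi0_inj,
      Module.finrank_self]
  · rw [normLapMult, eigH hm, LinearMap.finrank_range_of_inj phiH_inj,
      Module.finrank_pi]
    simp
  · rw [normLapMult, eigT hm, LinearMap.finrank_range_of_inj phiT_inj,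
      Module.finrank_pi]
    simp
  · rw [normLapMult, eig2 hm, LinearMap.finrank_range_of_inj phi2_inj,
      Module.finrank_self]
end

section
/- Let Γ be a connected finite simple graph on N ≥ 3 vertices whose spectral gap from 1 satisfies ε > 1/2. Then for every vertex v there exists a neighbor w of v with deg w ≤ 3. -/
open Finset

/-- If a connected finite simple graph on `N ≥ 3` vertices has spectral gap from `1`
satisfying `ε > 1/2`, then every vertex has a neighbor of degree at most `3`. -/
theorem exists_neighbor_degree_le_three {V : Type*} [Fintype V] (G : SimpleGraph V)
    [DecidableRel G.Adj] (hconn : G.Connected) (hN : 3 ≤ Fintype.card V)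
    (hgap : 1 / 2 < specGapOne G) :
    ∀ v : V, ∃ w : V, G.Adj v w ∧ G.degree w ≤ 3 := by
  classical
  have hnt : Nontrivial V := Fintype.one_lt_card_iff_nontrivial.mp (by omega)
  have hdegpos : ∀ u : V, 0 < G.degree u := by
    intro u
    rw [G.degree_pos_iff_exists_adj]
    obtain ⟨u', hne⟩ := exists_ne u
    obtain ⟨p⟩ := hconn.preconnected u u'
    cases p with
    | nil => exact absurd rfl hne.symm
    | cons h _ => exact ⟨_, h⟩
  set d : V → ℝ := fun u => (G.degree u : ℝ) with hd_def
  have hd : ∀ u, 0 < d u := fun u =>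
    show (0:ℝ) < (G.degree u : ℝ) by exact_mod_cast hdegpos u
  have hsq : ∀ u, 0 < Real.sqrt (d u) := fun u => Real.sqrt_pos.mpr (hd u)
  have hsqmul : ∀ u, Real.sqrt (d u) * Real.sqrt (d u) = d u :=
    fun u => Real.mul_self_sqrt (hd u).le
  set S : Matrix V V ℝ :=
    Matrix.of (fun u w => (if G.Adj u w then (1:ℝ) else 0) /
      (Real.sqrt (d u) * Real.sqrt (d w))) with hS_def
  have hS : S.IsHermitian := by
    unfold Matrix.IsHermitian
    ext u w
    simp only [hS_def, Matrix.conjTranspose_apply, Matrix.of_apply, star_trivial]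
    by_cases h : G.Adj u w
    · simp [h, h.symm, mul_comm]
    · simp only [h, if_false]
      rw [if_neg (fun h' => h (G.adj_symm h')), zero_div, zero_div]
  -- every eigenvalue t of S gives eigenvalue 1 - t of the normalized Laplacian
  have heig : ∀ i : V, normLapEigenvalue G (1 - hS.eigenvalues i) := by
    intro i
    set t := hS.eigenvalues i with ht_def
    set b : V → ℝ := ⇑(hS.eigenvectorBasis i) with hb_def
    have hbv : S.mulVec b = t • b := hS.mulVec_eigenvectorBasis i
    refine ⟨fun w => b w / Real.sqrt (d w), ?_, ?_⟩
    · intro hzero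
      have hbz : ∀ w, b w = 0 := by
        intro w
        have := congrFun hzero w
        simp only [Pi.zero_apply] at this
        exact (div_eq_zero_iff.mp this).resolve_right (hsq w).ne'
      have hnorm : ‖hS.eigenvectorBasis i‖ = 1 :=
        hS.eigenvectorBasis.orthonormal.1 i
      rw [EuclideanSpace.norm_eq] at hnorm
      have hz : ∀ x : V, ‖hS.eigenvectorBasis i x‖ ^ 2 = 0 := by
        intro x
        rw [show hS.eigenvectorBasis i x = b x from rfl, hbz x]
        simp
      rw [Finset.sum_congr rfl (fun x _ => hz x), Finset.sum_const_zero] at hnorm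
      simp at hnorm
    · intro u
      have hmv := congrFun hbv u
      have hsum : ∑ w, S u w * b w = t * b u := by
        simpa [Matrix.mulVec, dotProduct] using hmv
      have hsum' : (∑ w ∈ G.neighborFinset u, b w / Real.sqrt (d w))
          = Real.sqrt (d u) * (t * b u) := by
        rw [← hsum, Finset.mul_sum]
        have hkey : ∀ w : V, Real.sqrt (d u) * (S u w * b w)
            = if G.Adj u w then b w / Real.sqrt (d w) else 0 := by
          intro w
          by_cases hw : G.Adj u w
          · simp only [hS_def, Matrix.of_apply, hw, if_true]
            field_simp
            exact mul_div_mul_left _ _ (hsq u).ne'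
          · simp [hS_def, hw]
        rw [Finset.sum_congr rfl (fun w _ => hkey w), ← Finset.sum_filter]
        apply Finset.sum_congr _ (fun _ _ => rfl)
        ext w
        simp [SimpleGraph.mem_neighborFinset]
      rw [hsum']
      have hne : Real.sqrt (d u) ≠ 0 := (hsq u).ne'
      have hdne : d u ≠ 0 := (hd u).ne'
      have : Real.sqrt (d u) * (t * b u) / d u = t * (b u / Real.sqrt (d u)) := by
        field_simp
        linear_combination (t * b u) * hsqmul u
      rw [this]
      ring
  -- hence every eigenvalue t of S satisfies 1/4 < t^2
  have htsq : ∀ i : V, (1:ℝ)/4 < (hS.eigenvalues i)^2 := by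
    intro i
    have hmem : |hS.eigenvalues i| ∈
        {x : ℝ | ∃ μ : ℝ, normLapEigenvalue G μ ∧ x = |1 - μ|} :=
      ⟨1 - hS.eigenvalues i, heig i, by ring_nf⟩
    have hbdd : BddBelow {x : ℝ | ∃ μ : ℝ, normLapEigenvalue G μ ∧ x = |1 - μ|} :=
      ⟨0, fun x ⟨μ, _, hx⟩ => hx ▸ abs_nonneg _⟩
    have h12 : (1:ℝ)/2 < |hS.eigenvalues i| := lt_of_lt_of_le hgap (csInf_le hbdd hmem)
    calc (1:ℝ)/4 = (1/2)^2 := by norm_num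
    _ < |hS.eigenvalues i|^2 := by
        apply pow_lt_pow_left₀ h12 (by norm_num) (by norm_num)
    _ = (hS.eigenvalues i)^2 := sq_abs _
  -- main argument
  intro v
  by_contra hcon
  push_neg at hcon
  have hdeg4 : ∀ w, G.Adj v w → (4:ℝ) ≤ d w := by
    intro w hw
    have h3 := hcon w hw
    have h4 : 4 ≤ G.degree w := by omega
    show (4:ℝ) ≤ (G.degree w : ℝ)
    exact_mod_cast h4
  set U : Matrix V V ℝ := (hS.eigenvectorUnitary : Matrix V V ℝ) with hU_def
  have hspec : S = U * Matrix.diagonal hS.eigenvalues * star U := by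
    have := hS.spectral_theorem
    simpa using this
  have hUU : U * star U = 1 := Matrix.mem_unitaryGroup_iff.mp hS.eigenvectorUnitary.2
  have hUU' : star U * U = 1 := Matrix.mem_unitaryGroup_iff'.mp hS.eigenvectorUnitary.2
  have hstarU : ∀ i j : V, (star U) i j = U j i := by
    intro i j
    simp [Matrix.star_apply]
  -- row of U has unit norm
  have hrow : ∑ i, (U v i)^2 = 1 := by
    have h := congrFun (congrFun hUU v) v
    simp only [Matrix.mul_apply, Matrix.one_apply_eq] at h
    rw [← h]
    apply Finset.sum_congr rfl
    intro i _
    rw [hstarU]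
    ring
  -- (S*S) v v via spectral theorem
  have hSS : S * S = U * Matrix.diagonal (fun i => (hS.eigenvalues i)^2) * star U := by
    conv_lhs => rw [hspec]
    have : (U * Matrix.diagonal hS.eigenvalues * star U) *
        (U * Matrix.diagonal hS.eigenvalues * star U)
        = U * (Matrix.diagonal hS.eigenvalues * (star U * U) * Matrix.diagonal hS.eigenvalues)
          * star U := by
      simp only [Matrix.mul_assoc]
    rw [this, hUU', Matrix.mul_one, Matrix.diagonal_mul_diagonal]
    congr 1
    congr 1
    funext i
    ring
  have hSSvv : (S * S) v v = ∑ i, (hS.eigenvalues i)^2 * (U v i)^2 := by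
    rw [hSS, Matrix.mul_apply]
    apply Finset.sum_congr rfl
    intro i _
    rw [Matrix.mul_diagonal, hstarU]
    ring
  -- (S*S) v v directly
  have hSSvv' : (S * S) v v = ∑ u ∈ G.neighborFinset v, 1 / (d v * d u) := by
    rw [Matrix.mul_apply]
    have hkey : ∀ u : V, S v u * S u v
        = if G.Adj v u then 1 / (d v * d u) else 0 := by
      intro u
      by_cases hu : G.Adj v u
      · simp only [hS_def, Matrix.of_apply, hu, hu.symm, if_true]
        rw [div_mul_div_comm, one_mul]
        congr 1
        nlinarith [hsqmul v, hsqmul u]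
      · simp [hS_def, hu, fun h => hu (G.adj_symm h)]
    rw [Finset.sum_congr rfl (fun u _ => hkey u), ← Finset.sum_filter]
    apply Finset.sum_congr _ (fun _ _ => rfl)
    ext u
    simp [SimpleGraph.mem_neighborFinset]
  -- upper bound: ≤ 1/4
  have hub : (S * S) v v ≤ 1/4 := by
    rw [hSSvv']
    have hcardd : (G.neighborFinset v).card = G.degree v := G.card_neighborFinset_eq_degree v
    calc ∑ u ∈ G.neighborFinset v, 1 / (d v * d u)
        ≤ ∑ u ∈ G.neighborFinset v, 1 / (d v * 4) := by
          apply Finset.sum_le_sum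
          intro u hu
          rw [SimpleGraph.mem_neighborFinset] at hu
          apply one_div_le_one_div_of_le
          · nlinarith [hd v]
          · exact mul_le_mul_of_nonneg_left (hdeg4 u hu) (hd v).le
    _ = (G.degree v : ℝ) * (1 / (d v * 4)) := by
          rw [Finset.sum_const, hcardd, nsmul_eq_mul]
    _ = 1/4 := by
          have hdv : (0:ℝ) < (G.degree v : ℝ) := by exact_mod_cast hdegpos v
          rw [hd_def]
          rw [one_div, mul_inv_eq_iff_eq_mul₀ (by positivity)]
          field_simp
  -- lower bound: > 1/4
  have hlb : 1/4 < (S * S) v v := by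
    rw [hSSvv]
    calc (1:ℝ)/4 = ∑ i, (1/4 : ℝ) * (U v i)^2 := by
          rw [← Finset.mul_sum, hrow, mul_one]
    _ < ∑ i, (hS.eigenvalues i)^2 * (U v i)^2 := by
          apply Finset.sum_lt_sum
          · intro i _
            apply mul_le_mul_of_nonneg_right (htsq i).le (sq_nonneg _)
          · have : ∃ i, (U v i)^2 ≠ 0 := by
              by_contra hall
              push_neg at hall
              have : ∑ i, (U v i)^2 = 0 := Finset.sum_eq_zero (fun i _ => hall i)
              rw [hrow] at this
              norm_num at this
            obtain ⟨i, hi⟩ := this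
            refine ⟨i, Finset.mem_univ i, ?_⟩
            have hpos : 0 < (U v i)^2 := lt_of_le_of_ne (sq_nonneg _) (Ne.symm hi)
            exact mul_lt_mul_of_pos_right (htsq i) hpos
  linarith
end

section
/- Let Γ be a connected finite simple graph on N ≥ 3 vertices whose spectral gap from 1 satisfies ε > 1/2. Then: (1) there are no distinct vertices u, w of degree 1 having a common neighbor v; and (2) there are no distinct vertices u ∼ v ∼ w with 1 ≤ deg u ≤ 2, 1 ≤ deg v ≤ 2 and 1 ≤ deg w ≤ 2. -/
open Finset

section Aux
open Matrix
variable {V : Type*} [Fintype V] [DecidableEq V] (G : SimpleGraph V) [DecidableRel G.Adj]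

set_option linter.unusedSectionVars false

noncomputable def Mmat : Matrix V V ℝ :=
  Matrix.of fun x y => (if G.Adj x y then (1:ℝ) else 0) /
    (Real.sqrt (G.degree x) * Real.sqrt (G.degree y))

lemma Mmat_herm : (Mmat G).IsHermitian := by
  unfold Matrix.IsHermitian
  ext x y
  simp only [Matrix.conjTranspose_apply, Mmat, Matrix.of_apply, star_trivial]
  rw [if_congr (G.adj_comm y x) rfl rfl, mul_comm]

lemma Mmat_symm : (Mmat G)ᵀ = Mmat G := by
  ext x y
  simp only [Matrix.transpose_apply, Mmat, Matrix.of_apply]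
  rw [if_congr (G.adj_comm x y) rfl rfl, mul_comm]

lemma bddgap : BddBelow {x : ℝ | ∃ μ : ℝ, normLapEigenvalue G μ ∧ x = |1 - μ|} := by
  refine ⟨0, ?_⟩
  rintro x ⟨μ, _, rfl⟩
  exact abs_nonneg _

lemma gap_le_abs_eigen (hd : ∀ x : V, 0 < G.degree x) {θ : ℝ} {b : V → ℝ} (hb : b ≠ 0)
    (heig : (Mmat G) *ᵥ b = θ • b) : specGapOne G ≤ |θ| := by
  have hmem : normLapEigenvalue G (1 - θ) := by
    refine ⟨fun x => b x / Real.sqrt (G.degree x), ?_, ?_⟩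
    · obtain ⟨x, hx⟩ := Function.ne_iff.mp hb
      intro h
      apply hx
      have := congrFun h x
      simp only [Pi.zero_apply] at this
      have hs : Real.sqrt (G.degree x) ≠ 0 :=
        ne_of_gt (Real.sqrt_pos.mpr (by exact_mod_cast hd x))
      exact (div_eq_zero_iff.mp this).resolve_right hs
    · intro v
      have hv := congrFun heig v
      have hs : Real.sqrt (G.degree v) ≠ 0 :=
        ne_of_gt (Real.sqrt_pos.mpr (by exact_mod_cast hd v))
      have hss : Real.sqrt (G.degree v) * Real.sqrt (G.degree v) = (G.degree v : ℝ) :=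
        Real.mul_self_sqrt (by positivity)
      have key : ∑ w ∈ G.neighborFinset v, b w / Real.sqrt (G.degree w)
          = θ * b v * Real.sqrt (G.degree v) := by
        have h1 : (Mmat G *ᵥ b) v
            = (∑ w ∈ G.neighborFinset v, b w / Real.sqrt (G.degree w)) /
              Real.sqrt (G.degree v) := by
          simp only [Matrix.mulVec, dotProduct, Mmat, Matrix.of_apply]
          rw [SimpleGraph.neighborFinset_eq_filter, Finset.sum_filter, Finset.sum_div]
          congr 1
          ext y
          by_cases h : G.Adj v y <;> simp [h] <;> ring
        rw [h1, Pi.smul_apply, smul_eq_mul] at hv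
        field_simp at hv ⊢
        linarith [hv]
      have hdv : (G.degree v : ℝ) ≠ 0 := ne_of_gt (by exact_mod_cast hd v)
      rw [key]
      set sq := Real.sqrt (G.degree v) with hsq
      field_simp
      rw [← hss, Real.sqrt_mul_self (Real.sqrt_nonneg _)]
      ring
  refine le_of_le_of_eq (csInf_le (bddgap G) ⟨1 - θ, hmem, rfl⟩) ?_
  congr 1
  ring

lemma norm_sq_eq (v : EuclideanSpace ℝ V) : ‖v‖^2 = ∑ x, v x ^ 2 := by
  rw [EuclideanSpace.norm_eq, Real.sq_sqrt (by positivity)]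
  simp [sq_abs]

lemma quad (hd : ∀ x : V, 0 < G.degree x) (hs : 0 ≤ specGapOne G) (g : V → ℝ) :
    specGapOne G ^ 2 * ∑ x, g x ^ 2 ≤ ∑ x, ((Mmat G *ᵥ g) x)^2 := by
  classical
  have hM := Mmat_herm G
  set b := hM.eigenvectorBasis with hb
  set θ := hM.eigenvalues with hθ
  have hb0 : ∀ i, (⇑(b i) : V → ℝ) ≠ 0 := fun i h => b.orthonormal.ne_zero i (by simpa using h)
  have habs : ∀ i, specGapOne G ≤ |θ i| := fun i =>
    gap_le_abs_eigen G hd (hb0 i) (hM.mulVec_eigenvectorBasis i)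
  set gE : EuclideanSpace ℝ V := WithLp.toLp 2 g with hgE
  set MgE : EuclideanSpace ℝ V := WithLp.toLp 2 (Mmat G *ᵥ g) with hMgE
  have hrepr : ∀ i : V, b.repr MgE i = θ i * b.repr gE i := by
    intro i
    rw [OrthonormalBasis.repr_apply_apply, OrthonormalBasis.repr_apply_apply]
    have h1 : (inner ℝ (b i) MgE : ℝ) = (⇑(b i) : V → ℝ) ⬝ᵥ (Mmat G *ᵥ g) := by
      simp [PiLp.inner_apply, RCLike.inner_apply, dotProduct, hMgE, mul_comm]
    have h2 : (inner ℝ (b i) gE : ℝ) = (⇑(b i) : V → ℝ) ⬝ᵥ g := by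
      simp [PiLp.inner_apply, RCLike.inner_apply, dotProduct, hgE, mul_comm]
    rw [h1, h2, dotProduct_mulVec, ← Mmat_symm G, Matrix.vecMul_transpose,
      hM.mulVec_eigenvectorBasis i, smul_dotProduct]
    simp [hθ, hb]
  have P : ∀ v : EuclideanSpace ℝ V, ∑ x, v x ^ 2 = ∑ i, (b.repr v i)^2 := by
    intro v
    rw [← norm_sq_eq, ← norm_sq_eq, b.repr.norm_map v]
  calc specGapOne G ^ 2 * ∑ x, g x ^ 2
      = ∑ i, specGapOne G ^ 2 * (b.repr gE i)^2 := by
        rw [show ∑ x, g x ^2 = ∑ x, gE x ^2 from rfl, P, Finset.mul_sum]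
    _ ≤ ∑ i, (θ i)^2 * (b.repr gE i)^2 := by
        refine Finset.sum_le_sum fun i _ => mul_le_mul_of_nonneg_right ?_ (sq_nonneg _)
        calc specGapOne G ^2 ≤ |θ i|^2 := pow_le_pow_left₀ hs (habs i) 2
          _ = (θ i)^2 := sq_abs _
    _ = ∑ i, (b.repr MgE i)^2 := by simp_rw [hrepr, mul_pow]
    _ = ∑ x, ((Mmat G *ᵥ g) x)^2 := by rw [← P MgE]

lemma falso (hd : ∀ x : V, 0 < G.degree x) (hgap : 1 / 2 < specGapOne G) (g : V → ℝ)
    (x0 : V) (hx0 : g x0 ≠ 0)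
    (hQ : ∑ x, ((Mmat G *ᵥ g) x)^2 ≤ 1/4 * ∑ x, g x ^ 2) : False := by
  have hs : (0:ℝ) ≤ specGapOne G := le_trans (by norm_num) hgap.le
  have h1 := quad G hd hs g
  have hQg : 0 < ∑ x, g x ^ 2 :=
    Finset.sum_pos' (fun x _ => sq_nonneg _) ⟨x0, Finset.mem_univ _, by positivity⟩
  have key : 1/4 * (∑ x, g x ^ 2) < specGapOne G ^ 2 * ∑ x, g x ^ 2 := by
    nlinarith [mul_pos (sub_pos.mpr hgap) hQg]
  linarith

lemma nbhd_one {a b : V} (h1 : G.degree a = 1) (hab : G.Adj a b) :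
    G.neighborFinset a = {b} := by
  symm
  apply Finset.eq_of_subset_of_card_le
  · simpa using hab
  · rw [Finset.card_singleton]
    exact le_of_eq ((G.card_neighborFinset_eq_degree a).trans h1)

lemma nbhd_two {a b c : V} (h2 : G.degree a = 2) (hab : G.Adj a b) (hac : G.Adj a c)
    (hbc : b ≠ c) : G.neighborFinset a = {b, c} := by
  symm
  apply Finset.eq_of_subset_of_card_le
  · simp [Finset.insert_subset_iff, hab, hac]
  · rw [Finset.card_pair hbc]
    exact le_of_eq ((G.card_neighborFinset_eq_degree a).trans h2)

lemma other_nb {a b : V} (h2 : G.degree a = 2) (hab : G.Adj a b) :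
    ∃ c, G.Adj a c ∧ c ≠ b ∧ G.neighborFinset a = {b, c} := by
  have hcard : (G.neighborFinset a).card = 2 :=
    (G.card_neighborFinset_eq_degree a).trans h2
  obtain ⟨x, y, hxy, hset⟩ := Finset.card_eq_two.mp hcard
  have hb : b ∈ G.neighborFinset a := by simpa using hab
  have hy : y ∈ G.neighborFinset a := by rw [hset]; simp
  have hx : x ∈ G.neighborFinset a := by rw [hset]; simp
  rw [hset, Finset.mem_insert, Finset.mem_singleton] at hb
  rcases hb with rfl | rfl
  · exact ⟨y, by simpa using hy, hxy.symm, hset⟩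
  · exact ⟨x, by simpa using hx, hxy, by rw [hset, Finset.pair_comm]⟩

noncomputable def stdvec (u w : V) : V → ℝ := fun y =>
  (if y = u then Real.sqrt (G.degree u) else 0) - (if y = w then Real.sqrt (G.degree w) else 0)

lemma stdvec_ne (u w : V) (huw : u ≠ w) (hd : ∀ x : V, 0 < G.degree x) :
    stdvec G u w u ≠ 0 := by
  unfold stdvec
  simp only [if_pos rfl, if_neg huw, sub_zero]
  exact ne_of_gt (Real.sqrt_pos.mpr (by exact_mod_cast hd u))

lemma mulVec_std (hd : ∀ x : V, 0 < G.degree x) (u w : V) (huw : u ≠ w) (x : V) :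
    (Mmat G *ᵥ stdvec G u w) x
      = ((if G.Adj x u then (1:ℝ) else 0) - (if G.Adj x w then 1 else 0)) /
          Real.sqrt (G.degree x) := by
  have hdu : Real.sqrt (G.degree u) ≠ 0 :=
    ne_of_gt (Real.sqrt_pos.mpr (by exact_mod_cast hd u))
  have hdw : Real.sqrt (G.degree w) ≠ 0 :=
    ne_of_gt (Real.sqrt_pos.mpr (by exact_mod_cast hd w))
  have h : ∀ y, Mmat G x y * stdvec G u w y
      = (if y = u then (if G.Adj x u then (1:ℝ) else 0) /
            (Real.sqrt (G.degree x) * Real.sqrt (G.degree u)) * Real.sqrt (G.degree u) else 0)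
        - (if y = w then (if G.Adj x w then (1:ℝ) else 0) /
            (Real.sqrt (G.degree x) * Real.sqrt (G.degree w)) * Real.sqrt (G.degree w) else 0) := by
    intro y
    unfold stdvec Mmat
    by_cases hy : y = u <;> by_cases hy2 : y = w <;> simp [hy, hy2, huw, Ne.symm huw] <;> ring
  simp only [Matrix.mulVec, dotProduct]
  rw [Finset.sum_congr rfl (fun y _ => h y), Finset.sum_sub_distrib]
  rw [Finset.sum_ite_eq' Finset.univ u, Finset.sum_ite_eq' Finset.univ w]
  simp only [Finset.mem_univ, if_pos]
  rw [div_mul_eq_mul_div, div_mul_eq_mul_div]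
  rw [mul_comm (Real.sqrt (G.degree x)) (Real.sqrt (G.degree u)),
      mul_comm (Real.sqrt (G.degree x)) (Real.sqrt (G.degree w))]
  rw [← div_div, ← div_div, mul_div_assoc, div_self hdu, mul_one,
      mul_div_assoc, div_self hdw, mul_one, div_sub_div_same]

lemma Qstd (u w : V) (huw : u ≠ w) :
    ∑ x, (stdvec G u w x)^2 = (G.degree u : ℝ) + G.degree w := by
  have h : ∀ x : V, (stdvec G u w x)^2
      = (if x = u then (G.degree u:ℝ) else 0) + (if x = w then (G.degree w:ℝ) else 0) := by
    intro x
    unfold stdvec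
    by_cases h1 : x = u
    · subst h1
      rw [if_pos rfl, if_neg huw, if_pos rfl, if_neg huw, sub_zero, add_zero,
        Real.sq_sqrt (Nat.cast_nonneg _)]
    · by_cases h2 : x = w
      · subst h2
        rw [if_neg h1, if_pos rfl, if_neg h1, if_pos rfl, zero_sub, zero_add, neg_sq,
          Real.sq_sqrt (Nat.cast_nonneg _)]
      · simp [h1, h2]
  rw [Finset.sum_congr rfl (fun x _ => h x), Finset.sum_add_distrib,
    Finset.sum_ite_eq' Finset.univ u, Finset.sum_ite_eq' Finset.univ w]
  simp

lemma Qstd_mul (hd : ∀ x : V, 0 < G.degree x) (u w : V) (huw : u ≠ w) :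
    ∑ x, ((Mmat G *ᵥ stdvec G u w) x)^2
      = ∑ x, ((if G.Adj x u then (1:ℝ) else 0) - (if G.Adj x w then 1 else 0))^2
          / (G.degree x : ℝ) := by
  refine Finset.sum_congr rfl fun x _ => ?_
  rw [mulVec_std G hd u w huw x, div_pow, Real.sq_sqrt (Nat.cast_nonneg _)]

lemma sum_le_one_pt (t : V → ℝ) (p : V) (c : ℝ)
    (h : ∀ x, t x ≤ if x = p then c else 0) : ∑ x, t x ≤ c := by
  calc ∑ x, t x ≤ ∑ x, (if x = p then c else 0) := Finset.sum_le_sum fun x _ => h x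
  _ = c := by rw [Finset.sum_ite_eq' Finset.univ]; simp

lemma sum_le_two_pt (t : V → ℝ) (p q : V) (c₁ c₂ : ℝ)
    (h : ∀ x, t x ≤ (if x = p then c₁ else 0) + (if x = q then c₂ else 0)) :
    ∑ x, t x ≤ c₁ + c₂ := by
  calc ∑ x, t x ≤ ∑ x, ((if x = p then c₁ else 0) + (if x = q then c₂ else 0)) :=
        Finset.sum_le_sum fun x _ => h x
  _ = c₁ + c₂ := by
      rw [Finset.sum_add_distrib, Finset.sum_ite_eq' Finset.univ, Finset.sum_ite_eq' Finset.univ]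
      simp

lemma case_deg1 (hd : ∀ x : V, 0 < G.degree x) (hgap : 1 / 2 < specGapOne G) {u v w : V}
    (huw : u ≠ w) (hu : G.Adj u v) (hw : G.Adj w v)
    (hdu : G.degree u = 1) (hdw : G.degree w = 1) : False := by
  have hNu := nbhd_one G hdu hu
  have hNw := nbhd_one G hdw hw
  have hAu : ∀ x, G.Adj x u ↔ x = v := fun x => by
    rw [G.adj_comm, ← SimpleGraph.mem_neighborFinset, hNu, Finset.mem_singleton]
  have hAw : ∀ x, G.Adj x w ↔ x = v := fun x => by
    rw [G.adj_comm, ← SimpleGraph.mem_neighborFinset, hNw, Finset.mem_singleton]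
  apply falso G hd hgap (stdvec G u w) u (stdvec_ne G u w huw hd)
  have hz : ∀ x, (Mmat G *ᵥ stdvec G u w) x = 0 := by
    intro x
    rw [mulVec_std G hd u w huw x, if_congr (hAu x) rfl rfl, if_congr (hAw x) rfl rfl,
      sub_self, zero_div]
  rw [show ∑ x, ((Mmat G *ᵥ stdvec G u w) x)^2 = 0 from by simp [hz]]
  positivity

lemma case_12_comp (hd : ∀ x : V, 0 < G.degree x) (hgap : 1 / 2 < specGapOne G)
    {a b c c' : V} (hac : a ≠ c)
    (hNa : G.neighborFinset a = {b}) (hda : G.degree a = 1)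
    (hNc : G.neighborFinset c = {b, c'}) (hdc : G.degree c = 2)
    (hc'b : c' ≠ b) (hc'2 : 2 ≤ G.degree c') : False := by
  have hAa : ∀ x, G.Adj x a ↔ x = b := fun x => by
    rw [G.adj_comm, ← SimpleGraph.mem_neighborFinset, hNa, Finset.mem_singleton]
  have hAc : ∀ x, G.Adj x c ↔ (x = b ∨ x = c') := fun x => by
    rw [G.adj_comm, ← SimpleGraph.mem_neighborFinset, hNc]; simp
  apply falso G hd hgap (stdvec G a c) a (stdvec_ne G a c hac hd)
  rw [Qstd_mul G hd a c hac, Qstd G a c hac, hda, hdc]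
  have hbound : ∑ x, ((if G.Adj x a then (1:ℝ) else 0) - if G.Adj x c then 1 else 0)^2
      / (G.degree x : ℝ) ≤ 1/2 := by
    apply sum_le_one_pt
    intro x
    by_cases hx : x = c'
    · rw [hx, if_pos rfl, if_congr (hAa c') rfl rfl, if_congr (hAc c') rfl rfl,
        if_neg hc'b, if_pos (Or.inr rfl), zero_sub, neg_one_sq]
      have hx2 : (2:ℝ) ≤ G.degree c' := by exact_mod_cast hc'2
      exact one_div_le_one_div_of_le (by norm_num) hx2
    · rw [if_neg hx, if_congr (hAa x) rfl rfl, if_congr (hAc x) rfl rfl,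
        if_congr (show (x = b ∨ x = c') ↔ x = b by simp [hx]) rfl rfl, sub_self]
      simp
  refine le_trans hbound ?_
  push_cast
  norm_num

lemma p4_case (hd : ∀ x : V, 0 < G.degree x) (hgap : 1 / 2 < specGapOne G) {a b c d : V}
    (hNa : G.neighborFinset a = {b}) (hNb : G.neighborFinset b = {a, c})
    (hNc : G.neighborFinset c = {b, d}) (hNd : G.neighborFinset d = {c})
    (hda : G.degree a = 1) (hdb : G.degree b = 2)
    (hdc : G.degree c = 2) (hdd : G.degree d = 1)
    (hab : a ≠ b) (hac : a ≠ c) (had : a ≠ d)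
    (hbc : b ≠ c) (hbd : b ≠ d) (hcd : c ≠ d) : False := by
  set g : V → ℝ := fun x => if x = a then (2:ℝ) else if x = b then Real.sqrt 2
    else if x = c then -Real.sqrt 2 else if x = d then -2 else 0 with hg
  have hAa : ∀ x, G.Adj x a ↔ x = b := fun x => by
    rw [G.adj_comm, ← SimpleGraph.mem_neighborFinset, hNa, Finset.mem_singleton]
  have hAb : ∀ x, G.Adj x b ↔ (x = a ∨ x = c) := fun x => by
    rw [G.adj_comm, ← SimpleGraph.mem_neighborFinset, hNb]; simp
  have hAc : ∀ x, G.Adj x c ↔ (x = b ∨ x = d) := fun x => by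
    rw [G.adj_comm, ← SimpleGraph.mem_neighborFinset, hNc]; simp
  have hAd : ∀ x, G.Adj x d ↔ x = c := fun x => by
    rw [G.adj_comm, ← SimpleGraph.mem_neighborFinset, hNd, Finset.mem_singleton]
  have ea : ((G.degree a : ℝ)) = 1 := by exact_mod_cast hda
  have eb : ((G.degree b : ℝ)) = 2 := by exact_mod_cast hdb
  have ec : ((G.degree c : ℝ)) = 2 := by exact_mod_cast hdc
  have ed : ((G.degree d : ℝ)) = 1 := by exact_mod_cast hdd
  have h2 : Real.sqrt 2 * Real.sqrt 2 = 2 := Real.mul_self_sqrt (by norm_num)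
  have h2ne : Real.sqrt 2 ≠ 0 := by positivity
  have hsplit : ∀ x y, Mmat G x y * g y
      = (if y = a then 2 * Mmat G x a else 0) + (if y = b then Real.sqrt 2 * Mmat G x b else 0)
        + (if y = c then -Real.sqrt 2 * Mmat G x c else 0)
        + (if y = d then -2 * Mmat G x d else 0) := by
    intro x y
    by_cases h1 : y = a <;> by_cases hh2 : y = b <;> by_cases h3 : y = c <;>
      by_cases h4 : y = d <;>
      simp [hg, h1, hh2, h3, h4, hab, hac, had, hbc, hbd, hcd, Ne.symm hab, Ne.symm hac,
        Ne.symm had, Ne.symm hbc, Ne.symm hbd, Ne.symm hcd] <;> ring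
  have hform : ∀ x, (Mmat G *ᵥ g) x
      = (2*(if x = b then (1:ℝ) else 0) + (if x = a ∨ x = c then (1:ℝ) else 0)
          - (if x = b ∨ x = d then (1:ℝ) else 0) - 2*(if x = c then (1:ℝ) else 0))
        / Real.sqrt (G.degree x) := by
    intro x
    have hdx : Real.sqrt (G.degree x) ≠ 0 :=
      ne_of_gt (Real.sqrt_pos.mpr (by exact_mod_cast hd x))
    show ∑ y, Mmat G x y * g y = _
    rw [Finset.sum_congr rfl (fun y _ => hsplit x y), Finset.sum_add_distrib,
      Finset.sum_add_distrib, Finset.sum_add_distrib,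
      Finset.sum_ite_eq' Finset.univ a, Finset.sum_ite_eq' Finset.univ b,
      Finset.sum_ite_eq' Finset.univ c, Finset.sum_ite_eq' Finset.univ d]
    simp only [Finset.mem_univ, if_pos]
    have ma : Mmat G x a = (if G.Adj x a then (1:ℝ) else 0) /
        (Real.sqrt (G.degree x) * Real.sqrt (G.degree a)) := rfl
    have mb : Mmat G x b = (if G.Adj x b then (1:ℝ) else 0) /
        (Real.sqrt (G.degree x) * Real.sqrt (G.degree b)) := rfl
    have mc : Mmat G x c = (if G.Adj x c then (1:ℝ) else 0) /
        (Real.sqrt (G.degree x) * Real.sqrt (G.degree c)) := rfl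
    have md : Mmat G x d = (if G.Adj x d then (1:ℝ) else 0) /
        (Real.sqrt (G.degree x) * Real.sqrt (G.degree d)) := rfl
    rw [ma, mb, mc, md, ea, eb, ec, ed, Real.sqrt_one,
      if_congr (hAa x) rfl rfl, if_congr (hAb x) rfl rfl, if_congr (hAc x) rfl rfl,
      if_congr (hAd x) rfl rfl]
    set A := (if x = b then (1:ℝ) else 0) with hA
    set B := (if x = a ∨ x = c then (1:ℝ) else 0) with hB
    set C := (if x = b ∨ x = d then (1:ℝ) else 0) with hC
    set D := (if x = c then (1:ℝ) else 0) with hD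
    field_simp
    ring
  have hMg : ∀ x, (Mmat G *ᵥ g) x = g x / 2 := by
    intro x
    rw [hform x]
    by_cases h1 : x = a
    · rw [h1, ea, Real.sqrt_one]
      have t1 : (a = a ∨ a = c) := Or.inl rfl
      simp [hg, hab, hac, had, t1]
    · by_cases hh2 : x = b
      · rw [hh2, eb]
        have t1 : ¬(b = a ∨ b = c) := by rintro (h | h); exacts [hab h.symm, hbc h]
        have t2 : (b = b ∨ b = d) := Or.inl rfl
        simp [hg, Ne.symm hab, hbc, hbd, t1, t2]
        field_simp
        linarith [h2]
      · by_cases h3 : x = c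
        · rw [h3, ec]
          have t1 : (c = a ∨ c = c) := Or.inr rfl
          have t2 : ¬(c = b ∨ c = d) := by rintro (h | h); exacts [hbc h.symm, hcd h]
          simp [hg, Ne.symm hac, Ne.symm hbc, hcd, t1, t2]
          field_simp
          linarith [h2]
        · by_cases h4 : x = d
          · rw [h4, ed, Real.sqrt_one]
            have t1 : ¬(d = a ∨ d = c) := by rintro (h | h); exacts [had h.symm, hcd h.symm]
            have t2 : (d = b ∨ d = d) := Or.inr rfl
            simp [hg, Ne.symm had, Ne.symm hbd, Ne.symm hcd, t1, t2, hcd]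
          · have t1 : ¬(x = a ∨ x = c) := by rintro (h | h); exacts [h1 h, h3 h]
            have t2 : ¬(x = b ∨ x = d) := by rintro (h | h); exacts [hh2 h, h4 h]
            simp [hg, h1, hh2, h3, h4, t1, t2]
  apply falso G hd hgap g a (by simp [hg])
  have he : ∑ x, ((Mmat G *ᵥ g) x)^2 = 1/4 * ∑ x, g x ^ 2 := by
    rw [Finset.sum_congr rfl (fun x _ => by rw [hMg x, div_pow]), ← Finset.sum_div]
    ring
  exact le_of_eq he

lemma case_12_full (hd : ∀ x : V, 0 < G.degree x) (hgap : 1 / 2 < specGapOne G)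
    {a b c : V} (hab : G.Adj a b) (hbc : G.Adj b c) (hac : a ≠ c)
    (hda : G.degree a = 1) (hNb : G.neighborFinset b = {a, c})
    (hdc : G.degree c = 2) : False := by
  have hNa := nbhd_one G hda hab
  have hdb : G.degree b = 2 := by
    rw [← G.card_neighborFinset_eq_degree, hNb, Finset.card_pair hac]
  obtain ⟨d, hdadj, hdb', hNc⟩ := other_nb G hdc hbc.symm
  rcases Nat.lt_or_ge (G.degree d) 2 with h1 | h2
  · have hdd : G.degree d = 1 := by have := hd d; omega
    have hNd := nbhd_one G hdd hdadj.symm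
    have hab' : a ≠ b := hab.ne
    have hbc' : b ≠ c := hbc.ne
    have hcd : c ≠ d := hdadj.ne
    have had : a ≠ d := by
      intro h
      subst h
      have hmem : c ∈ G.neighborFinset a := by
        rw [SimpleGraph.mem_neighborFinset]
        exact hdadj.symm
      rw [hNa, Finset.mem_singleton] at hmem
      exact hbc' hmem.symm
    have hbd : b ≠ d := Ne.symm hdb'
    exact p4_case G hd hgap hNa hNb hNc hNd hda hdb hdc hdd hab' hac had hbc' hbd hcd
  · exact case_12_comp G hd hgap hac hNa hda hNc hdc hdb' h2

lemma case_22_full (hd : ∀ x : V, 0 < G.degree x) (hgap : 1 / 2 < specGapOne G)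
    {u v w : V} (huv : G.Adj u v) (hvw : G.Adj v w) (huw : u ≠ w)
    (hNv : G.neighborFinset v = {u, w}) (hdu : G.degree u = 2)
    (hdw : G.degree w = 2) : False := by
  have hdv : G.degree v = 2 := by
    rw [← G.card_neighborFinset_eq_degree, hNv, Finset.card_pair huw]
  by_cases hadj : G.Adj u w
  · have hNu := nbhd_two G hdu huv hadj hvw.ne
    have hNw := nbhd_two G hdw hvw.symm hadj.symm huv.ne'
    have hAu : ∀ x, G.Adj x u ↔ (x = v ∨ x = w) := fun x => by
      rw [G.adj_comm, ← SimpleGraph.mem_neighborFinset, hNu]; simp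
    have hAw : ∀ x, G.Adj x w ↔ (x = v ∨ x = u) := fun x => by
      rw [G.adj_comm, ← SimpleGraph.mem_neighborFinset, hNw]; simp
    apply falso G hd hgap (stdvec G u w) u (stdvec_ne G u w huw hd)
    rw [Qstd_mul G hd u w huw, Qstd G u w huw, hdu, hdw]
    have hbound : ∑ x, ((if G.Adj x u then (1:ℝ) else 0) - if G.Adj x w then 1 else 0)^2
        / (G.degree x : ℝ) ≤ 1/2 + 1/2 := by
      apply sum_le_two_pt _ u w
      intro x
      rw [if_congr (hAu x) rfl rfl, if_congr (hAw x) rfl rfl]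
      by_cases h1 : x = u
      · rw [h1, if_pos rfl, if_neg huw,
          if_neg (show ¬(u = v ∨ u = w) by rintro (h | h); exacts [huv.ne h, huw h]),
          if_pos (Or.inr rfl), hdu]
        norm_num
      · by_cases h2 : x = w
        · rw [h2, if_neg (Ne.symm huw), if_pos rfl, if_pos (Or.inr rfl),
            if_neg (show ¬(w = v ∨ w = u) by rintro (h | h); exacts [hvw.ne' h, Ne.symm huw h]),
            hdw]
          norm_num
        · rw [if_neg h1, if_neg h2,
            if_congr (show (x = v ∨ x = w) ↔ x = v by simp [h2]) rfl rfl,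
            if_congr (show (x = v ∨ x = u) ↔ x = v by simp [h1]) rfl rfl, sub_self]
          simp
    push_cast
    linarith
  · obtain ⟨u', hu'adj, hu'v, hNu⟩ := other_nb G hdu huv
    obtain ⟨w', hw'adj, hw'v, hNw⟩ := other_nb G hdw hvw.symm
    have hu'w : u' ≠ w := fun h => hadj (h ▸ hu'adj)
    have hw'u : w' ≠ u := fun h => hadj (h ▸ hw'adj).symm
    have hAu : ∀ x, G.Adj x u ↔ (x = v ∨ x = u') := fun x => by
      rw [G.adj_comm, ← SimpleGraph.mem_neighborFinset, hNu]; simp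
    have hAw : ∀ x, G.Adj x w ↔ (x = v ∨ x = w') := fun x => by
      rw [G.adj_comm, ← SimpleGraph.mem_neighborFinset, hNw]; simp
    by_cases heq : u' = w'
    · subst heq
      apply falso G hd hgap (stdvec G u w) u (stdvec_ne G u w huw hd)
      have hz : ∀ x, (Mmat G *ᵥ stdvec G u w) x = 0 := by
        intro x
        rw [mulVec_std G hd u w huw x, if_congr (hAu x) rfl rfl, if_congr (hAw x) rfl rfl,
          sub_self, zero_div]
      rw [show ∑ x, ((Mmat G *ᵥ stdvec G u w) x)^2 = 0 from by simp [hz]]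
      positivity
    · rcases Nat.lt_or_ge (G.degree u') 2 with h1 | h2
      · have hdu' : G.degree u' = 1 := by have := hd u'; omega
        refine case_12_full G hd hgap hu'adj.symm huv hu'v hdu' ?_ hdv
        rw [hNu, Finset.pair_comm]
      · rcases Nat.lt_or_ge (G.degree w') 2 with h1' | h2'
        · have hdw' : G.degree w' = 1 := by have := hd w'; omega
          refine case_12_full G hd hgap hw'adj.symm hvw.symm hw'v hdw' ?_ hdv
          rw [hNw, Finset.pair_comm]
        · apply falso G hd hgap (stdvec G u w) u (stdvec_ne G u w huw hd)
          rw [Qstd_mul G hd u w huw, Qstd G u w huw, hdu, hdw]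
          have hbound : ∑ x, ((if G.Adj x u then (1:ℝ) else 0) - if G.Adj x w then 1 else 0)^2
              / (G.degree x : ℝ) ≤ 1/2 + 1/2 := by
            apply sum_le_two_pt _ u' w'
            intro x
            rw [if_congr (hAu x) rfl rfl, if_congr (hAw x) rfl rfl]
            by_cases hx1 : x = u'
            · rw [hx1, if_pos rfl, if_neg heq, add_zero]
              have hb : ((if u' = v ∨ u' = u' then (1:ℝ) else 0)
                  - if u' = v ∨ u' = w' then 1 else 0)^2 ≤ 1 := by
                rw [if_pos (Or.inr rfl)]
                by_cases hcase : (u' = v ∨ u' = w')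
                · rw [if_pos hcase]; norm_num
                · rw [if_neg hcase]; norm_num
              have hdpos : (0:ℝ) < G.degree u' := by exact_mod_cast hd u'
              have hd2 : (2:ℝ) ≤ G.degree u' := by exact_mod_cast h2
              calc ((if u' = v ∨ u' = u' then (1:ℝ) else 0)
                    - if u' = v ∨ u' = w' then 1 else 0)^2 / (G.degree u' : ℝ)
                  ≤ 1 / (G.degree u' : ℝ) := by
                    exact (div_le_div_iff_of_pos_right hdpos).mpr hb
                _ ≤ 1/2 := one_div_le_one_div_of_le (by norm_num) hd2
            · by_cases hx2 : x = w'
              · rw [hx2, if_neg (fun h => hx1 (hx2.trans h) : ¬w' = u'), if_pos rfl, zero_add]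
                have hb : ((if w' = v ∨ w' = u' then (1:ℝ) else 0)
                    - if w' = v ∨ w' = w' then 1 else 0)^2 ≤ 1 := by
                  rw [if_pos (Or.inr rfl : w' = v ∨ w' = w')]
                  by_cases hcase : (w' = v ∨ w' = u')
                  · rw [if_pos hcase]; norm_num
                  · rw [if_neg hcase]; norm_num
                have hdpos : (0:ℝ) < G.degree w' := by exact_mod_cast hd w'
                have hd2 : (2:ℝ) ≤ G.degree w' := by exact_mod_cast h2'
                calc ((if w' = v ∨ w' = u' then (1:ℝ) else 0)
                      - if w' = v ∨ w' = w' then 1 else 0)^2 / (G.degree w' : ℝ)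
                    ≤ 1 / (G.degree w' : ℝ) := by
                      exact (div_le_div_iff_of_pos_right hdpos).mpr hb
                  _ ≤ 1/2 := one_div_le_one_div_of_le (by norm_num) hd2
              · rw [if_neg hx1, if_neg hx2,
                  if_congr (show (x = v ∨ x = u') ↔ x = v by simp [hx1]) rfl rfl,
                  if_congr (show (x = v ∨ x = w') ↔ x = v by simp [hx2]) rfl rfl, sub_self]
                simp
          push_cast
          linarith

end Aux

/-- If a connected finite simple graph on `N ≥ 3` vertices has spectral gap from `1`
satisfying `ε > 1/2`, then (1) there are no two distinct vertices of degree `1` with a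
common neighbor, and (2) there are no three distinct vertices `u ∼ v ∼ w` all of whose
degrees lie between `1` and `2`. -/
theorem no_small_degree_paths {V : Type*} [Fintype V] (G : SimpleGraph V)
    [DecidableRel G.Adj] (hconn : G.Connected) (hN : 3 ≤ Fintype.card V)
    (hgap : 1 / 2 < specGapOne G) :
    (∀ u w v : V, u ≠ w → G.degree u = 1 → G.degree w = 1 →
        ¬(G.Adj u v ∧ G.Adj w v)) ∧
    (∀ u v w : V, u ≠ v → v ≠ w → u ≠ w → G.Adj u v → G.Adj v w →
        ¬(1 ≤ G.degree u ∧ G.degree u ≤ 2 ∧ 1 ≤ G.degree v ∧ G.degree v ≤ 2 ∧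
          1 ≤ G.degree w ∧ G.degree w ≤ 2)) := by
  classical
  have hd : ∀ x : V, 0 < G.degree x := by
    intro x
    have hy : ∃ y : V, y ≠ x := by
      by_contra h
      push_neg at h
      have : Fintype.card V ≤ 1 := Fintype.card_le_one_iff.mpr fun a b => (h a).trans (h b).symm
      omega
    obtain ⟨y, hy⟩ := hy
    obtain ⟨p⟩ := hconn.preconnected x y
    cases p with
    | nil => exact absurd rfl hy
    | cons h _ => exact G.degree_pos_iff_exists_adj x |>.mpr ⟨_, h⟩
  constructor
  · rintro u w v huw hdu hdw ⟨h1, h2⟩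
    exact case_deg1 G hd hgap huw h1 h2 hdu hdw
  · rintro u v w huv hvw huw h1 h2 ⟨hu1, hu2, hv1, hv2, hw1, hw2⟩
    have hNv : G.neighborFinset v = {u, w} := by
      have hsub : ({u, w} : Finset V) ⊆ G.neighborFinset v := by
        simp [Finset.insert_subset_iff, h1.symm, h2]
      have h2v : 2 ≤ G.degree v := by
        rw [← G.card_neighborFinset_eq_degree]
        calc 2 = ({u, w} : Finset V).card := (Finset.card_pair huw).symm
          _ ≤ _ := Finset.card_le_card hsub
      exact nbhd_two G (le_antisymm hv2 h2v) h1.symm h2 huw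
    have hu' : G.degree u = 1 ∨ G.degree u = 2 := by omega
    have hw' : G.degree w = 1 ∨ G.degree w = 2 := by omega
    rcases hu' with hdu | hdu <;> rcases hw' with hdw | hdw
    · exact case_deg1 G hd hgap huw h1 h2.symm hdu hdw
    · exact case_12_full G hd hgap h1 h2 huw hdu hNv hdw
    · refine case_12_full G hd hgap h2.symm h1.symm (Ne.symm huw) hdw ?_ hdu
      rw [hNv, Finset.pair_comm]
    · exact case_22_full G hd hgap h1 h2 huw hNv hdu hdw
end

section
/- Let Γ be a connected finite simple graph on N ≥ 3 vertices whose spectral gap from 1 satisfies ε > 1/2. Then there are no vertices u ∼ v ∼ w with 2 ≤ deg u ≤ 3, 2 ≤ deg v ≤ 3 and 2 ≤ deg w ≤ 3. -/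
open Finset

set_option linter.unusedSectionVars false

open Matrix

section Spectral


variable {V : Type*} [Fintype V] (G : SimpleGraph V) [DecidableRel G.Adj]

/-- From a test function with small Rayleigh quotient, get an eigenvalue near 1. -/
lemma specGapOne_le_half (hdeg : ∀ x : V, 0 < G.degree x) (f : V → ℝ) (hf : f ≠ 0)
    (hineq : ∑ x, (∑ y ∈ G.neighborFinset x, f y)^2 / (G.degree x : ℝ)
      ≤ (1/4) * ∑ x, (G.degree x : ℝ) * (f x)^2) :
    specGapOne G ≤ 1/2 := by
  classical
  set d : V → ℝ := fun x => (G.degree x : ℝ) with hd_def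
  have hd : ∀ x, 0 < d x := fun x => Nat.cast_pos.2 (hdeg x)
  set q : V → ℝ := fun x => Real.sqrt (d x) with hq_def
  have hq : ∀ x, 0 < q x := fun x => Real.sqrt_pos.2 (hd x)
  have hqq : ∀ x, q x * q x = d x := fun x => Real.mul_self_sqrt (hd x).le
  set M : Matrix V V ℝ := fun x y => (if G.Adj x y then 1 else 0) / (q x * q y) with hM_def
  have hMsymm : ∀ x y, M x y = M y x := by
    intro x y
    simp only [hM_def]
    have : G.Adj x y ↔ G.Adj y x := ⟨fun h => h.symm, fun h => h.symm⟩
    rw [if_congr this rfl rfl, mul_comm]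
  have hM : M.IsHermitian := by
    unfold Matrix.IsHermitian
    ext x y
    simp only [Matrix.conjTranspose_apply, star_trivial]
    exact hMsymm y x
  -- the weighted test vector
  set g : V → ℝ := fun x => q x * f x with hg_def
  have hg : g ≠ 0 := by
    intro h
    apply hf
    funext x
    have := congrFun h x
    simp only [hg_def, Pi.zero_apply] at this ⊢
    rcases mul_eq_zero.1 this with h' | h'
    · exact absurd h' (hq x).ne'
    · exact h'
  -- row sums
  have hrowgen : ∀ (z : V → ℝ) (x : V),
      (M *ᵥ z) x = (∑ y ∈ G.neighborFinset x, z y / q y) / q x := by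
    intro z x
    simp only [Matrix.mulVec, dotProduct]
    have : ∀ y, (if G.Adj x y then (1:ℝ) else 0) / (q x * q y) * z y
        = if G.Adj x y then z y / q y / q x else 0 := by
      intro y
      by_cases h : G.Adj x y
      · simp only [h, if_true]
        rw [one_div_mul_eq_div, div_div, mul_comm (q y) (q x)]
      · simp [h]
    rw [Finset.sum_congr rfl (fun y _ => this y)]
    rw [Finset.sum_ite, Finset.sum_const_zero, add_zero, ← Finset.sum_div]
    congr 1
    apply Finset.sum_congr
    · ext y; simp [SimpleGraph.mem_neighborFinset]
    · intros; rfl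
  have hrow : ∀ x, (M *ᵥ g) x = (∑ y ∈ G.neighborFinset x, f y) / q x := by
    intro x
    rw [hrowgen g x]
    congr 1
    apply Finset.sum_congr rfl
    intro y _
    simp only [hg_def]
    rw [mul_comm, mul_div_assoc, div_self (hq y).ne', mul_one]
  have hMgMg : (M *ᵥ g) ⬝ᵥ (M *ᵥ g) = ∑ x, (∑ y ∈ G.neighborFinset x, f y)^2 / d x := by
    simp only [dotProduct]
    apply Finset.sum_congr rfl
    intro x _
    rw [hrow x, div_mul_div_comm, hqq x, ← sq]
  have hgg : g ⬝ᵥ g = ∑ x, d x * (f x)^2 := by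
    simp only [dotProduct, hg_def]
    apply Finset.sum_congr rfl
    intro x _
    rw [sq, ← hqq x]
    ring
  -- spectral decomposition
  set U : Matrix V V ℝ := (hM.eigenvectorUnitary : Matrix V V ℝ) with hU_def
  set ν : V → ℝ := hM.eigenvalues with hν_def
  have hstar : star U = Uᵀ := by
    ext i j
    simp [Matrix.star_eq_conjTranspose, Matrix.conjTranspose_apply]
  have hUU : Uᵀ * U = 1 := by
    rw [← hstar]
    exact Unitary.coe_star_mul_self hM.eigenvectorUnitary
  have hUU' : U * Uᵀ = 1 := by
    rw [← hstar]
    exact Unitary.coe_mul_star_self hM.eigenvectorUnitary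
  -- Parseval-type norm preservation
  have hpres : ∀ z : V → ℝ, (U *ᵥ z) ⬝ᵥ (U *ᵥ z) = z ⬝ᵥ z := by
    intro z
    rw [Matrix.dotProduct_mulVec, ← Matrix.mulVec_transpose, Matrix.mulVec_mulVec, hUU,
      Matrix.one_mulVec]
  set y : V → ℝ := Uᵀ *ᵥ g with hy_def
  have hgy : U *ᵥ y = g := by
    rw [hy_def, Matrix.mulVec_mulVec, hUU', Matrix.one_mulVec]
  have hspec : M = U * Matrix.diagonal ν * Uᵀ := by
    rw [← hstar]
    have h1 := hM.spectral_theorem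
    rwa [show RCLike.ofReal ∘ hM.eigenvalues = ν by
      funext i; simp [hν_def, RCLike.ofReal_real_eq_id]] at h1
  have hMg : M *ᵥ g = U *ᵥ (fun i => ν i * y i) := by
    rw [hspec, ← Matrix.mulVec_mulVec, ← Matrix.mulVec_mulVec]
    have : Matrix.diagonal ν *ᵥ (Uᵀ *ᵥ g) = fun i => ν i * y i :=
      funext fun i => Matrix.mulVec_diagonal ν (Uᵀ *ᵥ g) i
    rw [this]
  -- transfer the inequality to eigenvalue coordinates
  have hkey : ∑ i, (ν i)^2 * (y i)^2 ≤ (1/4) * ∑ i, (y i)^2 := by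
    have h1 : (M *ᵥ g) ⬝ᵥ (M *ᵥ g) = ∑ i, (ν i)^2 * (y i)^2 := by
      rw [hMg, hpres]
      simp only [dotProduct]
      exact Finset.sum_congr rfl fun i _ => by ring
    have h2 : g ⬝ᵥ g = ∑ i, (y i)^2 := by
      conv_lhs => rw [← hgy]
      rw [hpres]
      simp only [dotProduct]
      exact Finset.sum_congr rfl fun i _ => by rw [sq]
    rw [← h1, ← h2, hMgMg, hgg]
    exact hineq
  -- some eigenvalue has |ν i| ≤ 1/2
  have hy0 : y ≠ 0 := by
    intro h
    apply hg
    rw [← hgy, h, Matrix.mulVec_zero]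
  obtain ⟨i0, hi0⟩ : ∃ i, y i ≠ 0 := by
    by_contra h
    push_neg at h
    exact hy0 (funext h)
  obtain ⟨j, hj⟩ : ∃ j, (ν j)^2 ≤ (1/2)^2 := by
    by_contra h
    push_neg at h
    have hlt : (1/4) * ∑ i, (y i)^2 < ∑ i, (ν i)^2 * (y i)^2 := by
      rw [Finset.mul_sum]
      apply Finset.sum_lt_sum
      · intro i _
        nlinarith [sq_nonneg (y i), sq_nonneg (ν i), h i]
      · refine ⟨i0, Finset.mem_univ _, ?_⟩
        have h1 : 0 < (y i0)^2 := by positivity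
        nlinarith [h i0]
    linarith
  have hjabs : |ν j| ≤ 1/2 := by
    nlinarith [sq_abs (ν j), abs_nonneg (ν j)]
  -- build the eigenfunction for the normalized Laplacian
  set u : V → ℝ := ⇑(hM.eigenvectorBasis j) with hu_def
  have humv : M *ᵥ u = ν j • u := hM.mulVec_eigenvectorBasis j
  have hu0 : u ≠ 0 := by
    have h1 : hM.eigenvectorBasis j ≠ 0 := hM.eigenvectorBasis.orthonormal.ne_zero j
    intro h
    apply h1
    ext x
    exact congrFun h x
  set f0 : V → ℝ := fun x => u x / q x with hf0_def
  have hf00 : f0 ≠ 0 := by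
    intro h
    apply hu0
    funext x
    have := congrFun h x
    simp only [hf0_def, Pi.zero_apply] at this ⊢
    rcases div_eq_zero_iff.1 this with h' | h'
    · exact h'
    · exact absurd h' (hq x).ne'
  have heig : normLapEigenvalue G (1 - ν j) := by
    refine ⟨f0, hf00, fun x => ?_⟩
    have hx := congrFun humv x
    rw [hrowgen u x] at hx
    have hx' : (∑ y ∈ G.neighborFinset x, u y / q y) / q x = ν j * u x := by
      rw [hx]; simp [Pi.smul_apply, smul_eq_mul]
    have hsum : ∑ w ∈ G.neighborFinset x, f0 w = ν j * u x * q x := by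
      have h1 : ∑ w ∈ G.neighborFinset x, f0 w = ∑ y ∈ G.neighborFinset x, u y / q y := rfl
      rw [h1, (div_eq_iff (hq x).ne').1 hx']
    have hdd : (G.degree x : ℝ) = q x * q x := (hqq x).symm
    rw [hsum, hdd]
    simp only [hf0_def]
    field_simp [(hq x).ne']
  have hmem : |ν j| ∈ {x : ℝ | ∃ μ : ℝ, normLapEigenvalue G μ ∧ x = |1 - μ|} :=
    ⟨1 - ν j, heig, by rw [show (1 : ℝ) - (1 - ν j) = ν j by ring]⟩
  have hbdd : BddBelow {x : ℝ | ∃ μ : ℝ, normLapEigenvalue G μ ∧ x = |1 - μ|} := by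
    refine ⟨0, fun x hx => ?_⟩
    obtain ⟨μ, _, hx⟩ := hx
    rw [hx]
    exact abs_nonneg _
  calc specGapOne G ≤ |ν j| := csInf_le hbdd hmem
  _ ≤ 1/2 := hjabs

end Spectral

section Comb


variable {V : Type*} [Fintype V] [DecidableEq V] (G : SimpleGraph V) [DecidableRel G.Adj]

lemma mem_nf_comm {s t : V} : t ∈ G.neighborFinset s ↔ s ∈ G.neighborFinset t := by
  simp only [SimpleGraph.mem_neighborFinset]
  exact ⟨SimpleGraph.Adj.symm, SimpleGraph.Adj.symm⟩

lemma deg_pos_of_adj {a b : V} (h : G.Adj a b) : 0 < G.degree b :=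
  (G.degree_pos_iff_exists_adj b).2 ⟨a, h.symm⟩

lemma pendant_nf {p x : V} (hd : G.degree p = 1) (h : G.Adj p x) :
    G.neighborFinset p = {x} := by
  obtain ⟨c, hc⟩ := Finset.card_eq_one.1 (by rw [← G.card_neighborFinset_eq_degree] at hd; exact hd)
  have hx : x ∈ G.neighborFinset p := (SimpleGraph.mem_neighborFinset _ _ _).2 h
  rw [hc] at hx ⊢
  rw [Finset.mem_singleton] at hx
  rw [hx]

lemma two_nf {b w : V} (hd : G.degree b = 2) (h : G.Adj b w) :
    ∃ z, z ≠ w ∧ G.Adj b z ∧ G.neighborFinset b = {w, z} := by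
  obtain ⟨x, y, hxy, hc⟩ := Finset.card_eq_two.1
    (by rw [← G.card_neighborFinset_eq_degree] at hd; exact hd)
  have hw : w ∈ G.neighborFinset b := (SimpleGraph.mem_neighborFinset _ _ _).2 h
  rw [hc, Finset.mem_insert, Finset.mem_singleton] at hw
  rcases hw with rfl | rfl
  · refine ⟨y, hxy.symm, ?_, hc⟩
    have : y ∈ G.neighborFinset b := by rw [hc]; simp
    exact (SimpleGraph.mem_neighborFinset _ _ _).1 this
  · refine ⟨x, hxy, ?_, by rw [hc, Finset.pair_comm]⟩
    have : x ∈ G.neighborFinset b := by rw [hc]; simp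
    exact (SimpleGraph.mem_neighborFinset _ _ _).1 this

/-- The test-function conclusion used everywhere. -/
def TestOK : Prop :=
  ∃ f : V → ℝ, f ≠ 0 ∧ ∑ x, (∑ y ∈ G.neighborFinset x, f y)^2 / (G.degree x : ℝ)
      ≤ (1/4) * ∑ x, (G.degree x : ℝ) * (f x)^2

lemma pair_test (a b : V) (hab : a ≠ b)
    (h : (∑ t ∈ G.neighborFinset a \ G.neighborFinset b, 1/(G.degree t : ℝ))
      + (∑ t ∈ G.neighborFinset b \ G.neighborFinset a, 1/(G.degree t : ℝ))
      ≤ ((G.degree a : ℝ) + (G.degree b : ℝ))/4) :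
    TestOK G := by
  classical
  refine ⟨fun t => (if t = a then 1 else 0) - (if t = b then 1 else 0), ?_, ?_⟩
  · intro h0
    have := congrFun h0 a
    simp [hab] at this
  · have hrow : ∀ x : V, (∑ y ∈ G.neighborFinset x,
        ((if y = a then (1:ℝ) else 0) - (if y = b then 1 else 0)))
        = (if a ∈ G.neighborFinset x then (1:ℝ) else 0)
          - (if b ∈ G.neighborFinset x then 1 else 0) := by
      intro x
      rw [Finset.sum_sub_distrib, Finset.sum_ite_eq' (G.neighborFinset x) a fun _ => (1:ℝ),
        Finset.sum_ite_eq' (G.neighborFinset x) b fun _ => (1:ℝ)]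
    have hS : ∑ x, (∑ y ∈ G.neighborFinset x,
        ((if y = a then (1:ℝ) else 0) - (if y = b then 1 else 0)))^2 / (G.degree x : ℝ)
        = (∑ t ∈ G.neighborFinset a \ G.neighborFinset b, 1/(G.degree t : ℝ))
          + ∑ t ∈ G.neighborFinset b \ G.neighborFinset a, 1/(G.degree t : ℝ) := by
      have hterm : ∀ x : V, (∑ y ∈ G.neighborFinset x,
          ((if y = a then (1:ℝ) else 0) - (if y = b then 1 else 0)))^2 / (G.degree x : ℝ)
          = if x ∈ (G.neighborFinset a \ G.neighborFinset b)
              ∪ (G.neighborFinset b \ G.neighborFinset a) then 1/(G.degree x : ℝ) else 0 := by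
        intro x
        rw [hrow x]
        have e1 : (a ∈ G.neighborFinset x) ↔ (x ∈ G.neighborFinset a) := mem_nf_comm G
        have e2 : (b ∈ G.neighborFinset x) ↔ (x ∈ G.neighborFinset b) := mem_nf_comm G
        by_cases h1 : x ∈ G.neighborFinset a <;> by_cases h2 : x ∈ G.neighborFinset b <;>
          simp [h1, h2, e1, e2, one_div]
      rw [Finset.sum_congr rfl fun x _ => hterm x, Finset.sum_ite_mem,
        Finset.univ_inter, Finset.sum_union disjoint_sdiff_sdiff]
    have hD : ∑ x, (G.degree x : ℝ) *
        ((if x = a then (1:ℝ) else 0) - (if x = b then 1 else 0))^2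
        = (G.degree a : ℝ) + (G.degree b : ℝ) := by
      have hterm : ∀ x : V, (G.degree x : ℝ) *
          ((if x = a then (1:ℝ) else 0) - (if x = b then 1 else 0))^2
          = if x ∈ ({a, b} : Finset V) then (G.degree x : ℝ) else 0 := by
        intro x
        by_cases h1 : x = a
        · subst h1; simp [hab]
        · by_cases h2 : x = b
          · subst h2; simp [h1]
          · simp [h1, h2]
      rw [Finset.sum_congr rfl fun x _ => hterm x, Finset.sum_ite_mem, Finset.univ_inter,
        Finset.sum_pair hab]
    rw [hS, hD]
    linarith

lemma special_test (u w v p r : V) (huv : G.Adj u v) (hwv : G.Adj w v) (huw : u ≠ w)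
    (hpu : G.Adj u p) (hrw : G.Adj w r) (hdp : G.degree p = 1) (hdr : G.degree r = 1)
    (h2v : 2 ≤ G.degree v) (h3v : G.degree v ≤ 3)
    (h2u : 2 ≤ G.degree u) (h2w : 2 ≤ G.degree w) :
    TestOK G := by
  classical
  have hNp : G.neighborFinset p = {u} := pendant_nf G hdp hpu.symm
  have hNr : G.neighborFinset r = {w} := pendant_nf G hdr hrw.symm
  have hpr : p ≠ r := by
    intro h
    apply huw
    have := hNp.symm.trans (h ▸ hNr)
    exact Finset.singleton_injective this
  have hpv : p ≠ v := fun h => by rw [h] at hdp; omega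
  have hrv : r ≠ v := fun h => by rw [h] at hdr; omega
  have huNv : u ∈ G.neighborFinset v := (SimpleGraph.mem_neighborFinset _ _ _).2 huv.symm
  have hwNv : w ∈ G.neighborFinset v := (SimpleGraph.mem_neighborFinset _ _ _).2 hwv.symm
  refine ⟨fun t => (if t = p then 1 else 0) + (if t = r then 1 else 0)
    - (if t = v then 1 else 0), ?_, ?_⟩
  · intro h0
    have := congrFun h0 p
    simp [hpr, hpv] at this
  · have hrow : ∀ x : V, (∑ y ∈ G.neighborFinset x,
        ((if y = p then (1:ℝ) else 0) + (if y = r then 1 else 0) - (if y = v then 1 else 0)))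
        = (if x = u then (1:ℝ) else 0) + (if x = w then 1 else 0)
          - (if x ∈ G.neighborFinset v then 1 else 0) := by
      intro x
      have h1 : ∀ y : V, ((if y = p then (1:ℝ) else 0) + (if y = r then 1 else 0)
          - (if y = v then 1 else 0))
          = ((if y = p then (1:ℝ) else 0) + (if y = r then 1 else 0)) - (if y = v then 1 else 0) :=
        fun y => rfl
      rw [Finset.sum_congr rfl fun y _ => h1 y, Finset.sum_sub_distrib, Finset.sum_add_distrib,
        Finset.sum_ite_eq' (G.neighborFinset x) p fun _ => (1:ℝ),
        Finset.sum_ite_eq' (G.neighborFinset x) r fun _ => (1:ℝ),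
        Finset.sum_ite_eq' (G.neighborFinset x) v fun _ => (1:ℝ)]
      have e1 : (p ∈ G.neighborFinset x) ↔ (x = u) := by
        rw [mem_nf_comm G, hNp, Finset.mem_singleton]
      have e2 : (r ∈ G.neighborFinset x) ↔ (x = w) := by
        rw [mem_nf_comm G, hNr, Finset.mem_singleton]
      have e3 : (v ∈ G.neighborFinset x) ↔ (x ∈ G.neighborFinset v) := mem_nf_comm G
      rw [if_congr e1 rfl rfl, if_congr e2 rfl rfl, if_congr e3 rfl rfl]
    have hS : ∑ x, (∑ y ∈ G.neighborFinset x,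
        ((if y = p then (1:ℝ) else 0) + (if y = r then 1 else 0) - (if y = v then 1 else 0)))^2
          / (G.degree x : ℝ)
        = ∑ t ∈ ((G.neighborFinset v).erase u).erase w, 1/(G.degree t : ℝ) := by
      have hterm : ∀ x : V, (∑ y ∈ G.neighborFinset x,
          ((if y = p then (1:ℝ) else 0) + (if y = r then 1 else 0) - (if y = v then 1 else 0)))^2
            / (G.degree x : ℝ)
          = if x ∈ ((G.neighborFinset v).erase u).erase w then 1/(G.degree x : ℝ) else 0 := by
        intro x
        rw [hrow x]
        by_cases h1 : x = u
        · subst h1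
          simp [huNv, (Ne.symm huw), Finset.mem_erase]
          exact Or.inl huw
        · by_cases h2 : x = w
          · subst h2
            simp [hwNv, h1, Finset.mem_erase]
          · by_cases h3 : x ∈ G.neighborFinset v
            · simp [h1, h2, h3, Finset.mem_erase, one_div]
            · simp [h1, h2, h3, Finset.mem_erase]
      rw [Finset.sum_congr rfl fun x _ => hterm x, Finset.sum_ite_mem, Finset.univ_inter]
    have hD : ∑ x, (G.degree x : ℝ) *
        ((if x = p then (1:ℝ) else 0) + (if x = r then 1 else 0) - (if x = v then 1 else 0))^2
        = (G.degree p : ℝ) + (G.degree r : ℝ) + (G.degree v : ℝ) := by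
      have hterm : ∀ x : V, (G.degree x : ℝ) *
          ((if x = p then (1:ℝ) else 0) + (if x = r then 1 else 0) - (if x = v then 1 else 0))^2
          = if x ∈ ({p, r, v} : Finset V) then (G.degree x : ℝ) else 0 := by
        intro x
        by_cases h1 : x = p
        · subst h1; simp [hpr, hpv]
        · by_cases h2 : x = r
          · subst h2; simp [h1, hrv]
          · by_cases h3 : x = v
            · subst h3; simp [h1, h2]
            · simp [h1, h2, h3]
      rw [Finset.sum_congr rfl fun x _ => hterm x, Finset.sum_ite_mem, Finset.univ_inter]
      rw [Finset.sum_insert (by simp [hpr, hpv]), Finset.sum_pair hrv]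
      ring
    rw [hS, hD, hdp, hdr]
    -- bound: each term ≤ 1, card = deg v - 2 ≤ 1
    have hcard : (((G.neighborFinset v).erase u).erase w).card = G.degree v - 2 := by
      rw [Finset.card_erase_of_mem (Finset.mem_erase.2 ⟨Ne.symm huw, hwNv⟩),
        Finset.card_erase_of_mem huNv, G.card_neighborFinset_eq_degree]
      omega
    have hbound : ∑ t ∈ ((G.neighborFinset v).erase u).erase w, 1/(G.degree t : ℝ)
        ≤ ((G.degree v : ℝ) - 2) * 1 := by
      calc ∑ t ∈ ((G.neighborFinset v).erase u).erase w, 1/(G.degree t : ℝ)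
          ≤ ∑ _t ∈ ((G.neighborFinset v).erase u).erase w, (1:ℝ) := by
            apply Finset.sum_le_sum
            intro t ht
            have : t ∈ G.neighborFinset v := Finset.mem_of_mem_erase (Finset.mem_of_mem_erase ht)
            have hpos : 0 < G.degree t :=
              deg_pos_of_adj G ((SimpleGraph.mem_neighborFinset _ _ _).1 this)
            rw [div_le_one (by exact_mod_cast hpos)]
            exact_mod_cast hpos
        _ = (((G.neighborFinset v).erase u).erase w).card * 1 := by
            rw [Finset.sum_const, nsmul_eq_mul]
        _ ≤ ((G.degree v : ℝ) - 2) * 1 := by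
            rw [hcard]
            have : ((G.degree v - 2 : ℕ) : ℝ) = (G.degree v : ℝ) - 2 := by
              rw [Nat.cast_sub h2v]
              norm_num
            linarith
    have : (2:ℝ) ≤ (G.degree v : ℝ) := by exact_mod_cast h2v
    have : (G.degree v : ℝ) ≤ 3 := by exact_mod_cast h3v
    linarith

lemma inv_deg_le_half {t : V} (h1 : 0 < G.degree t) (h2 : G.degree t ≠ 1) :
    1/(G.degree t : ℝ) ≤ 1/2 := by
  have : (2:ℝ) ≤ (G.degree t : ℝ) := by exact_mod_cast (by omega : 2 ≤ G.degree t)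
  rw [div_le_div_iff₀ (by linarith) (by norm_num)]
  linarith

lemma inv_deg_le_cast {t : V} {k : ℕ} (hk : 0 < k) (h : k ≤ G.degree t) :
    1/(G.degree t : ℝ) ≤ 1/(k : ℝ) := by
  have h1 : (0:ℝ) < (k:ℝ) := by exact_mod_cast hk
  have h2 : (k:ℝ) ≤ (G.degree t : ℝ) := by exact_mod_cast h
  rw [div_le_div_iff₀ (by linarith) h1]
  linarith

/-- Pendant `q` attached to `m`, paired against a vertex `x` adjacent to `m`,
all of whose neighbors are non-pendant. -/
lemma pend_pair (q m x : V) (hq1 : G.degree q = 1) (hqm : G.Adj q m) (hxm : G.Adj x m)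
    (hqx : q ≠ x) (hnp : ∀ t ∈ G.neighborFinset x, G.degree t ≠ 1)
    (h3x : G.degree x ≤ 3) : TestOK G := by
  have hNq : G.neighborFinset q = {m} := pendant_nf G hq1 hqm
  have hmNx : m ∈ G.neighborFinset x := (SimpleGraph.mem_neighborFinset _ _ _).2 hxm
  apply pair_test G q x hqx
  have hA : G.neighborFinset q \ G.neighborFinset x = ∅ := by
    rw [hNq]
    exact Finset.sdiff_eq_empty_iff_subset.2 (Finset.singleton_subset_iff.2 hmNx)
  have hB : G.neighborFinset x \ G.neighborFinset q = (G.neighborFinset x).erase m := by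
    rw [hNq, Finset.sdiff_singleton_eq_erase]
  rw [hA, hB, Finset.sum_empty, zero_add]
  have hcard : ((G.neighborFinset x).erase m).card = G.degree x - 1 := by
    rw [Finset.card_erase_of_mem hmNx, G.card_neighborFinset_eq_degree]
  have hxpos : 0 < G.degree x := deg_pos_of_adj G hxm.symm
  calc ∑ t ∈ (G.neighborFinset x).erase m, 1/(G.degree t : ℝ)
      ≤ ∑ _t ∈ (G.neighborFinset x).erase m, (1/2 : ℝ) := by
        apply Finset.sum_le_sum
        intro t ht
        have htx : t ∈ G.neighborFinset x := Finset.mem_of_mem_erase ht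
        exact inv_deg_le_half G
          (deg_pos_of_adj G ((SimpleGraph.mem_neighborFinset _ _ _).1 htx)) (hnp t htx)
    _ = (((G.neighborFinset x).erase m).card : ℝ) * (1/2) := by
        rw [Finset.sum_const, nsmul_eq_mul]
    _ ≤ ((G.degree q : ℝ) + (G.degree x : ℝ))/4 := by
        have h1 : (((G.neighborFinset x).erase m).card : ℝ) = (G.degree x : ℝ) - 1 := by
          rw [hcard, Nat.cast_sub (by omega)]
          norm_num
        have h2 : (G.degree x : ℝ) ≤ 3 := by exact_mod_cast h3x
        have h3 : (G.degree q : ℝ) = 1 := by exact_mod_cast hq1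
        rw [h1, h3]
        linarith

lemma side_sum_bound (A : Finset V) (k n : ℕ) (hk : 0 < k)
    (hbound : ∀ t ∈ A, k ≤ G.degree t) (hcard : A.card ≤ n) :
    ∑ t ∈ A, 1/(G.degree t : ℝ) ≤ (n : ℝ)/(k : ℝ) := by
  have hk' : (0:ℝ) < (k:ℝ) := by exact_mod_cast hk
  have hA' : (A.card : ℝ) ≤ (n:ℝ) := by exact_mod_cast hcard
  calc ∑ t ∈ A, 1/(G.degree t : ℝ) ≤ ∑ _t ∈ A, (1/(k:ℝ)) :=
        Finset.sum_le_sum fun t ht => inv_deg_le_cast G hk (hbound t ht)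
    _ = (A.card : ℝ) * (1/(k:ℝ)) := by rw [Finset.sum_const, nsmul_eq_mul]
    _ ≤ (n:ℝ)/(k:ℝ) := by
        have h2 := mul_le_mul_of_nonneg_right hA' (le_of_lt (one_div_pos.2 hk'))
        rw [div_eq_mul_one_div]
        ring_nf
        ring_nf at h2
        linarith

lemma card_sdiff_le_pred (a b : V) (hv : v ∈ G.neighborFinset b) (hv' : v ∈ G.neighborFinset a) :
    (G.neighborFinset a \ G.neighborFinset b).card ≤ G.degree a - 1 := by
  have hsub : G.neighborFinset a \ G.neighborFinset b ⊆ (G.neighborFinset a).erase v := by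
    intro t ht
    rw [Finset.mem_sdiff] at ht
    refine Finset.mem_erase.2 ⟨?_, ht.1⟩
    intro h
    exact ht.2 (h ▸ hv)
  calc (G.neighborFinset a \ G.neighborFinset b).card
      ≤ ((G.neighborFinset a).erase v).card := Finset.card_le_card hsub
    _ = G.degree a - 1 := by rw [Finset.card_erase_of_mem hv', G.card_neighborFinset_eq_degree]

/-- The core case analysis at a minimal admissible triple, assuming `deg u ≤ deg w`. -/
lemma core (u v w : V)
    (huw : u ≠ w) (huv : G.Adj u v) (hvw : G.Adj v w)
    (h2u : 2 ≤ G.degree u) (h3u : G.degree u ≤ 3) (h2v : 2 ≤ G.degree v)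
    (h3v : G.degree v ≤ 3) (h2w : 2 ≤ G.degree w) (h3w : G.degree w ≤ 3)
    (hmin : ∀ a b c : V, a ≠ c → G.Adj a b → G.Adj b c → 2 ≤ G.degree a → G.degree a ≤ 3 →
      2 ≤ G.degree b → G.degree b ≤ 3 → 2 ≤ G.degree c → G.degree c ≤ 3 →
      G.degree u + G.degree v + G.degree w ≤ G.degree a + G.degree b + G.degree c)
    (hle : G.degree u ≤ G.degree w) : TestOK G := by
  have hvu : G.Adj v u := huv.symm
  have hwv : G.Adj w v := hvw.symm
  have hvNu : v ∈ G.neighborFinset u := (SimpleGraph.mem_neighborFinset _ _ _).2 huv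
  have huNv : u ∈ G.neighborFinset v := (SimpleGraph.mem_neighborFinset _ _ _).2 hvu
  have hwNv : w ∈ G.neighborFinset v := (SimpleGraph.mem_neighborFinset _ _ _).2 hvw
  have hvNw : v ∈ G.neighborFinset w := (SimpleGraph.mem_neighborFinset _ _ _).2 hwv
  by_cases hqv : ∃ q ∈ G.neighborFinset v, G.degree q = 1
  · obtain ⟨q, hqmem, hq1⟩ := hqv
    have hqadj : G.Adj q v := ((SimpleGraph.mem_neighborFinset _ _ _).1 hqmem).symm
    by_cases hpw : ∃ r ∈ G.neighborFinset w, G.degree r = 1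
    · obtain ⟨r, hrmem, hr1⟩ := hpw
      have hradj : G.Adj w r := (SimpleGraph.mem_neighborFinset _ _ _).1 hrmem
      by_cases hpu : ∃ p ∈ G.neighborFinset u, G.degree p = 1
      · obtain ⟨p, hpmem, hp1⟩ := hpu
        have hpadj : G.Adj u p := (SimpleGraph.mem_neighborFinset _ _ _).1 hpmem
        exact special_test G u w v p r huv hwv huw hpadj hradj hp1 hr1 h2v h3v h2u h2w
      · -- no pendant at u : pair (q, u)
        push_neg at hpu
        refine pend_pair G q v u hq1 hqadj huv ?_ hpu h3u
        intro h; rw [h] at hq1; omega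
    · -- no pendant at w : pair (q, w)
      push_neg at hpw
      refine pend_pair G q v w hq1 hqadj hwv ?_ hpw h3w
      intro h; rw [h] at hq1; omega
  · push_neg at hqv
    by_cases hpu : ∃ p ∈ G.neighborFinset u, G.degree p = 1
    · obtain ⟨p, hpmem, hp1⟩ := hpu
      have hpadj : G.Adj p u := ((SimpleGraph.mem_neighborFinset _ _ _).1 hpmem).symm
      refine pend_pair G p u v hp1 hpadj hvu ?_ hqv h3v
      intro h; rw [h] at hp1; omega
    · push_neg at hpu
      by_cases hpw : ∃ r ∈ G.neighborFinset w, G.degree r = 1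
      · obtain ⟨r, hrmem, hr1⟩ := hpw
        have hradj : G.Adj r w := ((SimpleGraph.mem_neighborFinset _ _ _).1 hrmem).symm
        refine pend_pair G r w v hr1 hradj hvw ?_ hqv h3v
        intro h; rw [h] at hr1; omega
      · -- no pendants at u, v, w
        push_neg at hpw
        -- minimality consequences
        have hF1 : ∀ t ∈ G.neighborFinset u, t ≠ v → G.degree w ≤ G.degree t := by
          intro t ht htv
          have hadj : G.Adj t u := ((SimpleGraph.mem_neighborFinset _ _ _).1 ht).symm
          have hpos : 0 < G.degree t := deg_pos_of_adj G hadj.symm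
          by_cases h4 : 4 ≤ G.degree t
          · omega
          · have h2t : 2 ≤ G.degree t := by
              have := hpu t ht
              omega
            have := hmin t u v htv hadj huv h2t (by omega) h2u h3u h2v h3v
            omega
        have hF2 : ∀ t ∈ G.neighborFinset w, t ≠ v → G.degree u ≤ G.degree t := by
          intro t ht htv
          have hadj : G.Adj t w := ((SimpleGraph.mem_neighborFinset _ _ _).1 ht).symm
          have hpos : 0 < G.degree t := deg_pos_of_adj G hadj.symm
          by_cases h4 : 4 ≤ G.degree t
          · omega
          · have h2t : 2 ≤ G.degree t := by
              have := hpw t ht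
              omega
            have := hmin t w v htv hadj hwv h2t (by omega) h2w h3w h2v h3v
            omega
        have hF3 : ∀ t ∈ G.neighborFinset v, t ≠ u → G.degree w ≤ G.degree t := by
          intro t ht htu
          have hadj : G.Adj t v := ((SimpleGraph.mem_neighborFinset _ _ _).1 ht).symm
          have hpos : 0 < G.degree t := deg_pos_of_adj G hadj.symm
          by_cases h4 : 4 ≤ G.degree t
          · omega
          · have h2t : 2 ≤ G.degree t := by
              have := hqv t ht
              omega
            have := hmin t v u htu hadj hvu h2t (by omega) h2v h3v h2u h3u
            omega
        rcases Nat.eq_or_lt_of_le hle with heq | hlt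
        · -- deg u = deg w : pair (u, w)
          apply pair_test G u w huw
          have hboundA : ∀ t ∈ G.neighborFinset u \ G.neighborFinset w,
              G.degree w ≤ G.degree t := by
            intro t ht
            rw [Finset.mem_sdiff] at ht
            exact hF1 t ht.1 (fun h => ht.2 (h ▸ hvNw))
          have hboundB : ∀ t ∈ G.neighborFinset w \ G.neighborFinset u,
              G.degree u ≤ G.degree t := by
            intro t ht
            rw [Finset.mem_sdiff] at ht
            exact hF2 t ht.1 (fun h => ht.2 (h ▸ hvNu))
          have hcardA := card_sdiff_le_pred G u w hvNw hvNu
          have hcardB := card_sdiff_le_pred G w u hvNu hvNw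
          have hA := side_sum_bound G _ (G.degree w) (G.degree u - 1) (by omega) hboundA hcardA
          have hB := side_sum_bound G _ (G.degree u) (G.degree w - 1) (by omega) hboundB hcardB
          have hdu : G.degree u = 2 ∨ G.degree u = 3 := by omega
          rcases hdu with hdu | hdu <;>
          · have hdw : G.degree w = G.degree u := heq.symm
            rw [hdu] at hdw
            rw [hdu, hdw] at hA hB ⊢
            norm_num at hA hB ⊢
            linarith
        · -- deg u = 2, deg w = 3
          have hdu2 : G.degree u = 2 := by omega
          have hdw3 : G.degree w = 3 := by omega
          by_cases hbex : ∃ b ∈ G.neighborFinset w, G.degree b = 2 ∧ ¬ G.Adj u b ∧ b ≠ u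
          · obtain ⟨b, hbw, hb2, hnadj, hbu⟩ := hbex
            have hadj_wb : G.Adj w b := (SimpleGraph.mem_neighborFinset _ _ _).1 hbw
            have hbv : b ≠ v := fun h => hnadj (h ▸ huv)
            obtain ⟨z, hzw, hbz, hNb⟩ := two_nf G hb2 hadj_wb.symm
            have hnvb : ¬ G.Adj v b := by
              intro hvb
              have := hmin u v b (Ne.symm hbu) huv hvb h2u h3u h2v h3v
                (by omega) (by omega)
              omega
            have hzv : z ≠ v := fun h => hnvb (by rw [← h]; exact hbz.symm)
            by_cases hz1 : G.degree z = 1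
            · -- pair (z, w)
              have hNz : G.neighborFinset z = {b} := pendant_nf G hz1 hbz.symm
              apply pair_test G z w hzw
              have hA0 : G.neighborFinset z \ G.neighborFinset w = ∅ := by
                rw [hNz]
                exact Finset.sdiff_eq_empty_iff_subset.2 (Finset.singleton_subset_iff.2 hbw)
              have hBeq : G.neighborFinset w \ G.neighborFinset z
                  = (G.neighborFinset w).erase b := by
                rw [hNz, Finset.sdiff_singleton_eq_erase]
              rw [hA0, Finset.sum_empty, zero_add, hBeq]
              have hbound : ∀ t ∈ (G.neighborFinset w).erase b, 2 ≤ G.degree t := by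
                intro t ht
                have htw : t ∈ G.neighborFinset w := Finset.mem_of_mem_erase ht
                have hpos : 0 < G.degree t :=
                  deg_pos_of_adj G ((SimpleGraph.mem_neighborFinset _ _ _).1 htw)
                have := hpw t htw
                omega
              have hcard : ((G.neighborFinset w).erase b).card ≤ 2 := by
                rw [Finset.card_erase_of_mem hbw, G.card_neighborFinset_eq_degree]
                omega
              have hB := side_sum_bound G _ 2 2 (by omega) hbound hcard
              have e1 : (G.degree z : ℝ) = 1 := by exact_mod_cast hz1
              have e2 : (G.degree w : ℝ) = 3 := by exact_mod_cast hdw3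
              rw [e1, e2]
              norm_num at hB ⊢
              linarith
            · have hz2 : 2 ≤ G.degree z := by
                have hpos : 0 < G.degree z := deg_pos_of_adj G hbz
                omega
              by_cases hzv2 : G.Adj v z
              · -- pair (b, v) with empty side
                apply pair_test G b v hbv
                have hzNv : z ∈ G.neighborFinset v := (SimpleGraph.mem_neighborFinset _ _ _).2 hzv2
                have hA0 : G.neighborFinset b \ G.neighborFinset v = ∅ := by
                  rw [hNb]
                  apply Finset.sdiff_eq_empty_iff_subset.2
                  intro t ht
                  rw [Finset.mem_insert, Finset.mem_singleton] at ht
                  rcases ht with rfl | rfl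
                  · exact hwNv
                  · exact hzNv
                rw [hA0, Finset.sum_empty, zero_add]
                have hbound : ∀ t ∈ G.neighborFinset v \ G.neighborFinset b, 2 ≤ G.degree t := by
                  intro t ht
                  rw [Finset.mem_sdiff] at ht
                  have hpos : 0 < G.degree t :=
                    deg_pos_of_adj G ((SimpleGraph.mem_neighborFinset _ _ _).1 ht.1)
                  have := hqv t ht.1
                  omega
                have hcard : (G.neighborFinset v \ G.neighborFinset b).card ≤ G.degree v - 2 := by
                  have hsub : G.neighborFinset v \ G.neighborFinset b
                      ⊆ ((G.neighborFinset v).erase w).erase z := by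
                    intro t ht
                    rw [Finset.mem_sdiff] at ht
                    refine Finset.mem_erase.2 ⟨?_, Finset.mem_erase.2 ⟨?_, ht.1⟩⟩
                    · intro h
                      apply ht.2
                      rw [hNb, h]
                      simp
                    · intro h
                      apply ht.2
                      rw [hNb, h]
                      simp
                  calc (G.neighborFinset v \ G.neighborFinset b).card
                      ≤ (((G.neighborFinset v).erase w).erase z).card := Finset.card_le_card hsub
                    _ = G.degree v - 2 := by
                        rw [Finset.card_erase_of_mem (Finset.mem_erase.2 ⟨hzw, hzNv⟩),
                          Finset.card_erase_of_mem hwNv, G.card_neighborFinset_eq_degree]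
                        omega
                have hB := side_sum_bound G _ 2 (G.degree v - 2) (by omega) hbound hcard
                have e1 : (G.degree b : ℝ) = 2 := by exact_mod_cast hb2
                have e2 : ((G.degree v - 2 : ℕ) : ℝ) = (G.degree v : ℝ) - 2 := by
                  rw [Nat.cast_sub h2v]; norm_num
                have e3 : (G.degree v : ℝ) ≤ 3 := by exact_mod_cast h3v
                rw [e1]
                rw [e2] at hB
                norm_num at hB ⊢
                linarith
              · -- pair (b, v), A-side = {z}
                apply pair_test G b v hbv
                have hzNv : z ∉ G.neighborFinset v := by
                  intro h
                  exact hzv2 ((SimpleGraph.mem_neighborFinset _ _ _).1 h)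
                have hApart : G.neighborFinset b \ G.neighborFinset v = {z} := by
                  rw [hNb]
                  ext t
                  simp only [Finset.mem_sdiff, Finset.mem_insert, Finset.mem_singleton]
                  constructor
                  · rintro ⟨rfl | rfl, ht2⟩
                    · exact absurd hwNv ht2
                    · rfl
                  · rintro rfl
                    exact ⟨Or.inr rfl, hzNv⟩
                have hzbound : G.degree v ≤ G.degree z := by
                  by_cases h4 : 4 ≤ G.degree z
                  · omega
                  · have := hmin z b w hzw hbz.symm hadj_wb.symm hz2 (by omega)
                      (by omega) (by omega) h2w h3w
                    omega
                have hBpart : G.neighborFinset v \ G.neighborFinset b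
                    = (G.neighborFinset v).erase w := by
                  ext t
                  rw [Finset.mem_sdiff, Finset.mem_erase, hNb, Finset.mem_insert,
                    Finset.mem_singleton]
                  constructor
                  · rintro ⟨ht1, ht2⟩
                    exact ⟨fun h => ht2 (Or.inl h), ht1⟩
                  · rintro ⟨ht1, ht2⟩
                    refine ⟨ht2, ?_⟩
                    rintro (rfl | rfl)
                    · exact ht1 rfl
                    · exact hzNv ht2
                have huB : u ∈ (G.neighborFinset v).erase w := Finset.mem_erase.2 ⟨huw, huNv⟩
                rw [hApart, hBpart, Finset.sum_singleton, ← Finset.add_sum_erase _ _ huB]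
                have hbound : ∀ t ∈ ((G.neighborFinset v).erase w).erase u,
                    3 ≤ G.degree t := by
                  intro t ht
                  rw [Finset.mem_erase] at ht
                  have := hF3 t (Finset.mem_of_mem_erase ht.2) ht.1
                  omega
                have hcard : (((G.neighborFinset v).erase w).erase u).card ≤ G.degree v - 2 := by
                  rw [Finset.card_erase_of_mem
                      (Finset.mem_erase.2 ⟨huw, huNv⟩),
                    Finset.card_erase_of_mem hwNv, G.card_neighborFinset_eq_degree]
                  omega
                have hRest := side_sum_bound G _ 3 (G.degree v - 2) (by omega) hbound hcard
                have hzle : 1/(G.degree z : ℝ) ≤ 1/(G.degree v : ℝ) :=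
                  inv_deg_le_cast G (by omega) hzbound
                have e1 : (G.degree b : ℝ) = 2 := by exact_mod_cast hb2
                have e4 : (G.degree u : ℝ) = 2 := by exact_mod_cast hdu2
                have hdv : G.degree v = 2 ∨ G.degree v = 3 := by omega
                rw [e1]
                rcases hdv with hdv | hdv
                · have e5 : (G.degree v : ℝ) = 2 := by exact_mod_cast hdv
                  rw [hdv] at hRest
                  rw [e5] at hzle ⊢
                  rw [e4]
                  norm_num at hRest hzle ⊢
                  linarith
                · have e5 : (G.degree v : ℝ) = 3 := by exact_mod_cast hdv
                  rw [hdv] at hRest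
                  rw [e5] at hzle ⊢
                  rw [e4]
                  norm_num at hRest hzle ⊢
                  linarith
          · -- no such b : pair (u, w)
            apply pair_test G u w huw
            have hboundA : ∀ t ∈ G.neighborFinset u \ G.neighborFinset w,
                3 ≤ G.degree t := by
              intro t ht
              rw [Finset.mem_sdiff] at ht
              have := hF1 t ht.1 (fun h => ht.2 (h ▸ hvNw))
              omega
            have hcardA : (G.neighborFinset u \ G.neighborFinset w).card ≤ 1 := by
              have := card_sdiff_le_pred G u w hvNw hvNu
              omega
            have hA := side_sum_bound G _ 3 1 (by omega) hboundA hcardA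
            have hboundB : ∀ t ∈ (G.neighborFinset w \ G.neighborFinset u).erase u,
                3 ≤ G.degree t := by
              intro t ht
              rw [Finset.mem_erase, Finset.mem_sdiff] at ht
              obtain ⟨htu, htw, htnu⟩ := ht
              have hpos : 0 < G.degree t :=
                deg_pos_of_adj G ((SimpleGraph.mem_neighborFinset _ _ _).1 htw)
              have hne1 := hpw t htw
              have hne2 : G.degree t ≠ 2 := by
                intro h2
                exact hbex ⟨t, htw, h2,
                  fun ha => htnu ((SimpleGraph.mem_neighborFinset _ _ _).2 ha), htu⟩
              omega
            have hcardB := card_sdiff_le_pred G w u hvNu hvNw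
            by_cases huB : u ∈ G.neighborFinset w \ G.neighborFinset u
            · rw [← Finset.add_sum_erase _ _ huB]
              have hcardBe : ((G.neighborFinset w \ G.neighborFinset u).erase u).card ≤ 1 := by
                rw [Finset.card_erase_of_mem huB]
                omega
              have hB := side_sum_bound G _ 3 1 (by omega) hboundB hcardBe
              have e4 : (G.degree u : ℝ) = 2 := by exact_mod_cast hdu2
              have e5 : (G.degree w : ℝ) = 3 := by exact_mod_cast hdw3
              rw [e4, e5]
              norm_num at hA hB ⊢
              linarith
            · have heq2 : (G.neighborFinset w \ G.neighborFinset u).erase u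
                  = G.neighborFinset w \ G.neighborFinset u :=
                Finset.erase_eq_of_notMem huB
              have hB := side_sum_bound G _ 3 2 (by omega)
                (fun t ht => hboundB t (by rw [heq2]; exact ht)) (by omega)
              have e4 : (G.degree u : ℝ) = 2 := by exact_mod_cast hdu2
              have e5 : (G.degree w : ℝ) = 3 := by exact_mod_cast hdw3
              rw [e4, e5]
              norm_num at hA hB ⊢
              linarith

end Comb

/-- If a connected finite simple graph on `N ≥ 3` vertices has spectral gap from `1`
satisfying `ε > 1/2`, then there are no three vertices `u ∼ v ∼ w` (with `u ≠ w`)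
all of whose degrees lie between `2` and `3`. -/
theorem no_degree_two_three_paths {V : Type*} [Fintype V] (G : SimpleGraph V)
    [DecidableRel G.Adj] (hconn : G.Connected) (hN : 3 ≤ Fintype.card V)
    (hgap : 1 / 2 < specGapOne G) :
    ∀ u v w : V, u ≠ w → G.Adj u v → G.Adj v w →
      ¬(2 ≤ G.degree u ∧ G.degree u ≤ 3 ∧ 2 ≤ G.degree v ∧ G.degree v ≤ 3 ∧
        2 ≤ G.degree w ∧ G.degree w ≤ 3) := by
  intro u v w huw huv hvw h
  obtain ⟨h2u, h3u, h2v, h3v, h2w, h3w⟩ := h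
  classical
  have hdeg : ∀ x : V, 0 < G.degree x := by
    intro x
    rw [G.degree_pos_iff_exists_adj]
    obtain ⟨y, hy⟩ := Fintype.exists_ne_of_one_lt_card (by omega) x
    obtain ⟨p⟩ := hconn.preconnected x y
    cases p with
    | nil => exact absurd rfl hy
    | cons hadj _ => exact ⟨_, hadj⟩
  set P : V × V × V → Prop := fun t => t.1 ≠ t.2.2 ∧ G.Adj t.1 t.2.1 ∧ G.Adj t.2.1 t.2.2 ∧
    2 ≤ G.degree t.1 ∧ G.degree t.1 ≤ 3 ∧ 2 ≤ G.degree t.2.1 ∧ G.degree t.2.1 ≤ 3 ∧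
    2 ≤ G.degree t.2.2 ∧ G.degree t.2.2 ≤ 3 with hP_def
  have hne : (Finset.univ.filter P).Nonempty := by
    refine ⟨(u, v, w), Finset.mem_filter.2 ⟨Finset.mem_univ _, ?_⟩⟩
    exact ⟨huw, huv, hvw, h2u, h3u, h2v, h3v, h2w, h3w⟩
  obtain ⟨t0, ht0, hmin0⟩ := Finset.exists_min_image (Finset.univ.filter P)
    (fun t => G.degree t.1 + G.degree t.2.1 + G.degree t.2.2) hne
  obtain ⟨u0, v0, w0⟩ := t0
  obtain ⟨hu0w0, hu0v0, hv0w0, h2u0, h3u0, h2v0, h3v0, h2w0, h3w0⟩ :=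
    (Finset.mem_filter.1 ht0).2
  have hminP : ∀ a b c : V, a ≠ c → G.Adj a b → G.Adj b c → 2 ≤ G.degree a →
      G.degree a ≤ 3 → 2 ≤ G.degree b → G.degree b ≤ 3 → 2 ≤ G.degree c → G.degree c ≤ 3 →
      G.degree u0 + G.degree v0 + G.degree w0 ≤ G.degree a + G.degree b + G.degree c := by
    intro a b c hac hab hbc h1 h2 h3 h4 h5 h6
    exact hmin0 (a, b, c) (Finset.mem_filter.2 ⟨Finset.mem_univ _,
      ⟨hac, hab, hbc, h1, h2, h3, h4, h5, h6⟩⟩)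
  have hTest : TestOK G := by
    rcases le_total (G.degree u0) (G.degree w0) with hle | hle
    · exact core G u0 v0 w0 hu0w0 hu0v0 hv0w0 h2u0 h3u0 h2v0 h3v0 h2w0 h3w0 hminP hle
    · refine core G w0 v0 u0 (Ne.symm hu0w0) hv0w0.symm hu0v0.symm h2w0 h3w0 h2v0 h3v0
        h2u0 h3u0 ?_ hle
      intro a b c hac hab hbc h1 h2 h3 h4 h5 h6
      have := hminP a b c hac hab hbc h1 h2 h3 h4 h5 h6
      omega
  obtain ⟨f, hf0, hineq⟩ := hTest
  have := specGapOne_le_half G hdeg f hf0 hineq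
  linarith
end
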